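/- arXiv:1505.04465 — 7 statements merged into one kernel-verified Lean document; each statement's English description precedes it below -/
import Mathlib

section
/- Let Γ be a group and P a real vector space with a linear Γ-action (a Γ-module). Suppose P has a basis S such that: (i) for every s ∈ S and γ ∈ Γ there exists t ∈ S with γ·s = t or γ·s = −t, and (ii) for every s ∈ S the stabilizer {γ ∈ Γ : γ·s = s} is finite. Then P is Γ-projective: for all real vector spaces V and W equipped with linear Γ-actions, every surjective Γ-equivariant linear map φ : V → W, and every Γ-equivariant linear map f : P → W, there exists a Γ-equivariant linear map f̃ : P → V with φ ∘ f̃ = f. -/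
/-!
`P` is a sum, over the `Γ`-orbits of the pairs `{b s, -b s}`, of modules induced from the
finite signed stabilizers. Concretely: fix a representative pair in each orbit and a linear
lift `σ` of `f`, and at `x = ± b s` average `γ • σ (γ⁻¹ • x)` over the finitely many `γ`
carrying the representative to `{x, -x}`. Left translation by `g` maps these transporters
of `x` onto those of `g • x`, so the average is `Γ`-equivariant and odd; as `f` is
equivariant, every term lifts `f x`.
-/

open scoped Pointwise

namespace MulAction

variable {G X : Type*} [Group G] [MulAction G X]

theorem finite_setOf_smul_eq_of_finite_stabilizer {x : X} (hx : {g : G | g • x = x}.Finite)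
    (y : X) : {g : G | g • x = y}.Finite := by
  rcases Set.eq_empty_or_nonempty {g : G | g • x = y} with h | ⟨g₀, hg₀⟩
  · simp [h]
  · refine (hx.image (g₀ * ·)).subset fun g hg => ⟨g₀⁻¹ * g, ?_, mul_inv_cancel_left g₀ g⟩
    simp_all [mul_smul, inv_smul_eq_iff]

theorem finite_setOf_smul_eq_of_finite_stabilizer' {x : X} (hx : {g : G | g • x = x}.Finite)
    (y : X) : {g : G | g • y = x}.Finite := by
  refine (finite_setOf_smul_eq_of_finite_stabilizer hx y).inv.subset
    fun g (hg : g • y = x) => ?_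
  simp [inv_smul_eq_iff, hg]

variable (G) in
def orbitRepTransporter (y : X) : Set G :=
  {g | g • (⟦y⟧ : orbitRel.Quotient G X).out = y}

theorem orbitRepTransporter_nonempty (y : X) : (orbitRepTransporter G y).Nonempty := by
  obtain ⟨g, hg⟩ := orbitRel_apply.mp (Quotient.mk_out (s := orbitRel G X) y)
  exact ⟨g⁻¹, by simp [orbitRepTransporter, ← hg]⟩

theorem orbitRepTransporter_finite {y : X} (hy : {g : G | g • y = y}.Finite) :
    (orbitRepTransporter G y).Finite :=
  finite_setOf_smul_eq_of_finite_stabilizer' hy _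

theorem orbitRepTransporter_smul (g : G) (y : X) :
    orbitRepTransporter G (g • y) = (g * ·) '' orbitRepTransporter G y := by
  have hrep : (⟦g • y⟧ : orbitRel.Quotient G X) = ⟦y⟧ :=
    Quotient.sound (orbitRel_apply.mpr (mem_orbit y g))
  ext γ
  simp only [orbitRepTransporter, hrep, Set.mem_ofPred_eq, Set.mem_image]
  constructor
  · intro h
    exact ⟨g⁻¹ * γ, by rw [mul_smul, h, inv_smul_smul], mul_inv_cancel_left g γ⟩
  · rintro ⟨δ, hδ, rfl⟩
    rw [mul_smul, hδ]

end MulAction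

open MulAction

section SignedAverage

variable (Γ : Type*) {k P V : Type*} [Group Γ] [Field k] [AddCommGroup P] [DistribMulAction Γ P]
  [AddCommGroup V] [Module k P] [Module k V] [DistribMulAction Γ V]

noncomputable def signedAverage (σ : P →ₗ[k] V) (x : P) : V :=
  ((orbitRepTransporter Γ ({x, -x} : Set P)).ncard : k)⁻¹ •
    ∑ᶠ γ ∈ orbitRepTransporter Γ ({x, -x} : Set P), γ • σ (γ⁻¹ • x)

variable {Γ}

theorem smul_set_pair_neg (g : Γ) (x : P) : g • ({x, -x} : Set P) = {g • x, -(g • x)} := by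
  simp [Set.smul_set_insert, smul_neg]

theorem finite_stabilizer_pair_neg {x : P} (hx : {g : Γ | g • x = x}.Finite) :
    {g : Γ | g • ({x, -x} : Set P) = {x, -x}}.Finite := by
  refine (hx.union (finite_setOf_smul_eq_of_finite_stabilizer hx (-x))).subset
    fun g (hg : g • _ = _) => ?_
  have : g • x ∈ ({x, -x} : Set P) := hg ▸ Set.smul_mem_smul_set (Set.mem_insert x _)
  simpa using this

theorem signedAverage_neg (σ : P →ₗ[k] V) (x : P)
    (hx : (orbitRepTransporter Γ ({x, -x} : Set P)).Finite) :
    signedAverage Γ σ (-x) = -signedAverage Γ σ x := by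
  have hpair : ({-x, - -x} : Set P) = {x, -x} := by rw [neg_neg, Set.pair_comm]
  simp only [signedAverage, hpair, smul_neg, map_neg]
  rw [finsum_mem_neg_distrib _ hx, smul_neg]

theorem signedAverage_smul [SMulCommClass Γ k V] (σ : P →ₗ[k] V) (g : Γ) (x : P)
    (hx : (orbitRepTransporter Γ ({x, -x} : Set P)).Finite) :
    signedAverage Γ σ (g • x) = g • signedAverage Γ σ x := by
  have hT := orbitRepTransporter_smul g ({x, -x} : Set P)
  rw [smul_set_pair_neg] at hT
  have hinj : Set.InjOn (g * ·) (orbitRepTransporter Γ ({x, -x} : Set P)) :=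
    (mul_right_injective g).injOn
  simp only [signedAverage, hT, Set.ncard_image_of_injective _ (mul_right_injective g),
    finsum_mem_image hinj, smul_comm g, smul_finsum_mem hx, mul_smul, mul_inv_rev, inv_smul_smul]

theorem map_signedAverage [CharZero k] {W : Type*} [AddCommGroup W] [Module k W]
    [DistribMulAction Γ W] {σ : P →ₗ[k] V} {φ : V →ₗ[k] W} {f : P →ₗ[k] W} (hσ : φ ∘ₗ σ = f)
    (hφ : ∀ (g : Γ) (v : V), φ (g • v) = g • φ v) (hf : ∀ (g : Γ) (p : P), f (g • p) = g • f p)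
    (x : P) (hx : (orbitRepTransporter Γ ({x, -x} : Set P)).Finite) :
    φ (signedAverage Γ σ x) = f x := by
  have hterm : ∀ γ : Γ, φ (γ • σ (γ⁻¹ • x)) = f x := fun γ => by
    rw [hφ, ← LinearMap.comp_apply, hσ, ← hf, smul_inv_smul]
  have hcard : ((orbitRepTransporter Γ ({x, -x} : Set P)).ncard : k) ≠ 0 :=
    Nat.cast_ne_zero.mpr ((Set.ncard_pos hx).mpr (orbitRepTransporter_nonempty _)).ne'
  rw [signedAverage, finsum_mem_eq_finite_toFinset_sum _ hx, map_smul, map_sum]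
  simp only [hterm, Finset.sum_const, ← Set.ncard_eq_toFinset_card _ hx,
    ← Nat.cast_smul_eq_nsmul k, smul_smul, inv_mul_cancel₀ hcard, one_smul]

end SignedAverage

theorem Module.Basis.map_smul_of_forall_basis {Γ k ι P V : Type*} [Group Γ] [Semiring k]
    [AddCommMonoid P] [Module k P] [DistribMulAction Γ P] [SMulCommClass Γ k P]
    [AddCommMonoid V] [Module k V] [DistribMulAction Γ V] [SMulCommClass Γ k V]
    (b : Module.Basis ι k P) {F : P →ₗ[k] V} (hF : ∀ (g : Γ) (i : ι), F (g • b i) = g • F (b i))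
    (g : Γ) (p : P) : F (g • p) = g • F p :=
  LinearMap.congr_fun (b.ext (f₁ := F ∘ₗ DistribSMul.toLinearMap k P g)
    (f₂ := DistribSMul.toLinearMap k V g ∘ₗ F) (hF g)) p

/-- Lemma 52 of Mineyev–Yaman, projectivity形:
If a `Γ`-module `P` (a real vector space with a linear `Γ`-action) has a basis `S` such that
`Γ` maps each basis vector to `±` a basis vector and each basis vector has finite stabilizer,
then `P` is `Γ`-projective. -/
theorem gamma_projective_of_signed_basis_finite_stabilizers
    {Γ : Type} [Group Γ] {P : Type} [AddCommGroup P] [Module ℝ P]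
    [DistribMulAction Γ P] [SMulCommClass Γ ℝ P]
    {S : Type} (b : Module.Basis S ℝ P)
    (hsign : ∀ (γ : Γ) (s : S), ∃ t : S, γ • b s = b t ∨ γ • b s = - b t)
    (hstab : ∀ s : S, {γ : Γ | γ • b s = b s}.Finite) :
    ∀ (V W : Type) [AddCommGroup V] [Module ℝ V] [DistribMulAction Γ V] [SMulCommClass Γ ℝ V]
      [AddCommGroup W] [Module ℝ W] [DistribMulAction Γ W] [SMulCommClass Γ ℝ W]
      (φ : V →ₗ[ℝ] W), Function.Surjective φ →
      (∀ (γ : Γ) (v : V), φ (γ • v) = γ • φ v) →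
      ∀ f : P →ₗ[ℝ] W, (∀ (γ : Γ) (p : P), f (γ • p) = γ • f p) →
      ∃ ft : P →ₗ[ℝ] V, (∀ (γ : Γ) (p : P), ft (γ • p) = γ • ft p) ∧ φ ∘ₗ ft = f := by
  intro V W _ _ _ _ _ _ _ _ φ hsurj hφ f hf
  obtain ⟨ψ, hψ⟩ := φ.exists_rightInverse_of_surjective (LinearMap.range_eq_top.mpr hsurj)
  have hlift : φ ∘ₗ (ψ ∘ₗ f) = f := by rw [← LinearMap.comp_assoc, hψ, LinearMap.id_comp]
  have hfin (s : S) : (orbitRepTransporter Γ ({b s, -b s} : Set P)).Finite :=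
    orbitRepTransporter_finite (finite_stabilizer_pair_neg (hstab s))
  refine ⟨b.constr ℝ fun s => signedAverage Γ (ψ ∘ₗ f) (b s),
    b.map_smul_of_forall_basis fun γ s => ?_, b.ext fun s => ?_⟩
  · have hconstr : b.constr ℝ (fun s => signedAverage Γ (ψ ∘ₗ f) (b s)) (γ • b s) =
        signedAverage Γ (ψ ∘ₗ f) (γ • b s) := by
      obtain ⟨t, ht | ht⟩ := hsign γ s
      · rw [ht, b.constr_basis]
      · rw [ht, map_neg, b.constr_basis, signedAverage_neg _ _ (hfin t)]
    rw [hconstr, signedAverage_smul _ _ _ (hfin s), b.constr_basis]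
  · simpa using map_signedAverage hlift hφ hf (b s) (hfin s)
end

section
/- Let Γ be a group, S a type, and let P := (S →₀ ℝ) be the space of finitely supported real functions on S with the ℓ¹ norm. Suppose Γ acts on P by linear maps so that: (i) for every s ∈ S and γ ∈ Γ there exist t ∈ S and ε ∈ {1, −1} with γ·(single s) = ε·(single t), and (ii) for every s ∈ S the set {γ ∈ Γ : γ·(single s) = single s} is finite. Let V and W be normed real vector spaces with linear Γ-actions that are uniformly bounded (there exist constants L_V, L_W such that ‖γ·v‖ ≤ L_V‖v‖ and ‖γ·w‖ ≤ L_W‖w‖ for all γ, v, w). Let φ : V → W be a surjective bounded Γ-equivariant linear map which is undistorted, i.e. there is K > 0 such that every w in the range of φ has a preimage v with φ(v) = w and ‖v‖ ≤ K‖w‖, and let f : P → W be a bounded Γ-equivariant linear map. Then there exists a bounded Γ-equivariant linear map f̃ : P → V with φ ∘ f̃ = f. -/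
/-!
Choose, for every signed indicator `±single s 1`, some bounded preimage under `φ` of its image
under `f`. Averaging these choices over the finite set of group elements that carry a fixed
representative of an orbit to a given point makes them `Γ`-equivariant without spoiling the
bound, and taking odd parts `(Ψ x - Ψ (-x)) / 2` makes them compatible with the signs, so that
they extend linearly from the basis `single s 1` of `S →₀ ℝ` to the required lift.
-/

noncomputable def l1Norm {T : Type} (c : T →₀ ℝ) : ℝ :=
  ∑ t ∈ c.support, |c t|

open MulAction Finset

section Averaging

variable {G X : Type*} [Group G] [MulAction G X]

theorem finite_setOf_smul_eq {a : X} (ha : (stabilizer G a : Set G).Finite) (b : X) :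
    {γ : G | γ • a = b}.Finite := by
  rcases em (∃ γ₀ : G, γ₀ • a = b) with ⟨γ₀, rfl⟩ | hb
  · refine (ha.preimage (mul_right_injective γ₀⁻¹).injOn).subset fun γ hγ => ?_
    simp_all [mem_stabilizer_iff, mul_smul]
  · exact Set.finite_empty.subset fun γ hγ => hb ⟨γ, hγ⟩

variable (G) in
noncomputable def orbitRep (x : X) : X := (Quotient.mk (orbitRel G X) x).out

theorem exists_smul_orbitRep_eq (x : X) : ∃ γ : G, γ • orbitRep G x = x :=
  orbitRel_apply.mp <|
    (orbitRel G X).iseqv.symm (Quotient.exact (Quotient.out_eq (Quotient.mk (orbitRel G X) x)))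

theorem orbitRep_smul (δ : G) (x : X) : orbitRep G (δ • x) = orbitRep G x :=
  congrArg Quotient.out (Quotient.sound' (orbitRel_apply.mpr (mem_orbit x δ)))

variable (hfin : ∀ x : X, (stabilizer G x : Set G).Finite)

noncomputable def repTransporter (x : X) : Finset G :=
  (finite_setOf_smul_eq (hfin (orbitRep G x)) x).toFinset

theorem mem_repTransporter {γ : G} {x : X} :
    γ ∈ repTransporter hfin x ↔ γ • orbitRep G x = x :=
  Set.Finite.mem_toFinset _

theorem repTransporter_nonempty (x : X) : (repTransporter hfin x).Nonempty :=
  let ⟨γ, hγ⟩ := exists_smul_orbitRep_eq x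
  ⟨γ, (mem_repTransporter hfin).mpr hγ⟩

theorem mul_mem_repTransporter_smul_iff {δ γ : G} {x : X} :
    δ * γ ∈ repTransporter hfin (δ • x) ↔ γ ∈ repTransporter hfin x := by
  rw [mem_repTransporter, mem_repTransporter, orbitRep_smul, mul_smul, smul_left_cancel_iff]

theorem card_repTransporter_smul (δ : G) (x : X) :
    #(repTransporter hfin (δ • x)) = #(repTransporter hfin x) :=
  (card_equiv (Equiv.mulLeft δ) fun _ => (mul_mem_repTransporter_smul_iff hfin).symm).symm

theorem sum_repTransporter_smul {M : Type*} [AddCommMonoid M] (F : G → M) (δ : G) (x : X) :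
    ∑ γ ∈ repTransporter hfin (δ • x), F γ = ∑ γ ∈ repTransporter hfin x, F (δ * γ) :=
  (sum_equiv (Equiv.mulLeft δ) (fun _ => (mul_mem_repTransporter_smul_iff hfin).symm)
    fun _ _ => rfl).symm

variable {V : Type*} [AddCommGroup V] [Module ℝ V] [DistribMulAction G V]

noncomputable def averagedLift (v₀ : X → V) (x : X) : V :=
  (#(repTransporter hfin x) : ℝ)⁻¹ • ∑ γ ∈ repTransporter hfin x, γ • v₀ (orbitRep G x)

theorem averagedLift_smul [SMulCommClass G ℝ V] (v₀ : X → V) (δ : G) (x : X) :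
    averagedLift hfin v₀ (δ • x) = δ • averagedLift hfin v₀ x := by
  simp only [averagedLift, card_repTransporter_smul, sum_repTransporter_smul, orbitRep_smul,
    smul_comm δ, smul_sum, mul_smul]

theorem map_averagedLift {W : Type*} [AddCommGroup W] [Module ℝ W] [SMul G W]
    (φ : V →ₗ[ℝ] W) (hφ : ∀ (γ : G) (v : V), φ (γ • v) = γ • φ v)
    (g : X → W) (hg : ∀ (γ : G) (x : X), g (γ • x) = γ • g x)
    (v₀ : X → V) (hv₀ : ∀ x, φ (v₀ x) = g x) (x : X) :
    φ (averagedLift hfin v₀ x) = g x := by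
  have hterm : ∀ γ ∈ repTransporter hfin x, φ (γ • v₀ (orbitRep G x)) = g x := by
    intro γ hγ
    rw [hφ, hv₀, ← hg, (mem_repTransporter hfin).mp hγ]
  have hcard : (#(repTransporter hfin x) : ℝ) ≠ 0 :=
    Nat.cast_ne_zero.mpr (repTransporter_nonempty hfin x).card_pos.ne'
  rw [averagedLift, map_smul, map_sum, sum_congr rfl hterm, sum_const,
    ← Nat.cast_smul_eq_nsmul ℝ, smul_smul, inv_mul_cancel₀ hcard, one_smul]

end Averaging

theorem norm_inv_card_smul_sum_le {ι E : Type*} [SeminormedAddCommGroup E] [NormedSpace ℝ E]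
    {s : Finset ι} (hs : s.Nonempty) {F : ι → E} {B : ℝ} (hF : ∀ i ∈ s, ‖F i‖ ≤ B) :
    ‖(#s : ℝ)⁻¹ • ∑ i ∈ s, F i‖ ≤ B := by
  have hcard : (0 : ℝ) < #s := Nat.cast_pos.mpr hs.card_pos
  rw [norm_smul, norm_inv, Real.norm_natCast, inv_mul_le_iff₀ hcard]
  simpa using norm_sum_le_of_le s hF

theorem norm_averagedLift_le {G X V : Type*} [Group G] [MulAction G X]
    [NormedAddCommGroup V] [NormedSpace ℝ V] [DistribMulAction G V]
    (hfin : ∀ x : X, (stabilizer G x : Set G).Finite) {L M : ℝ} (hL0 : 0 ≤ L)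
    (hL : ∀ (γ : G) (v : V), ‖γ • v‖ ≤ L * ‖v‖) (v₀ : X → V) (hM : ∀ x, ‖v₀ x‖ ≤ M) (x : X) :
    ‖averagedLift hfin v₀ x‖ ≤ L * M :=
  norm_inv_card_smul_sum_le (repTransporter_nonempty hfin x) fun γ _ =>
    (hL γ _).trans (mul_le_mul_of_nonneg_left (hM _) hL0)

theorem norm_linearCombination_le {S : Type} {E : Type*} [SeminormedAddCommGroup E]
    [NormedSpace ℝ E] {v : S → E} {B : ℝ} (hv : ∀ s, ‖v s‖ ≤ B) (c : S →₀ ℝ) :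
    ‖Finsupp.linearCombination ℝ v c‖ ≤ B * l1Norm c := by
  rw [Finsupp.linearCombination_apply, Finsupp.sum, l1Norm, mul_sum]
  refine norm_sum_le_of_le _ fun s _ => ?_
  rw [norm_smul, Real.norm_eq_abs, mul_comm]
  exact mul_le_mul_of_nonneg_right (hv s) (abs_nonneg _)

section SignedIndicators

variable {Γ : Type*} {S : Type} [Group Γ] [DistribMulAction Γ (S →₀ ℝ)]
  (hsign : ∀ (γ : Γ) (s : S), ∃ t : S,
    γ • Finsupp.single s (1 : ℝ) = Finsupp.single t (1 : ℝ) ∨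
    γ • Finsupp.single s (1 : ℝ) = - Finsupp.single t (1 : ℝ))

def signedIndicators : SubMulAction Γ (S →₀ ℝ) where
  carrier := {c | ∃ s, c = Finsupp.single s 1 ∨ c = -Finsupp.single s 1}
  smul_mem' γ := by
    rintro _ ⟨s, rfl | rfl⟩ <;> obtain ⟨t, ht | ht⟩ := hsign γ s
    exacts [⟨t, .inl ht⟩, ⟨t, .inr ht⟩, ⟨t, .inr (by rw [smul_neg, ht])⟩,
      ⟨t, .inl (by rw [smul_neg, ht, neg_neg])⟩]

theorem single_mem_signedIndicators (s : S) :
    Finsupp.single s 1 ∈ signedIndicators hsign := ⟨s, .inl rfl⟩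

theorem neg_mem_signedIndicators {c : S →₀ ℝ} (hc : c ∈ signedIndicators hsign) :
    -c ∈ signedIndicators hsign := by
  obtain ⟨s, rfl | rfl⟩ := hc
  exacts [⟨s, .inr rfl⟩, ⟨s, .inl (neg_neg _)⟩]

theorem l1Norm_of_mem_signedIndicators {c : S →₀ ℝ} (hc : c ∈ signedIndicators hsign) :
    l1Norm c = 1 := by
  obtain ⟨s, rfl | rfl⟩ := hc <;> simp [l1Norm]

theorem finite_stabilizer_signedIndicators
    (hstab : ∀ s : S, {γ : Γ | γ • Finsupp.single s (1 : ℝ) = Finsupp.single s (1 : ℝ)}.Finite)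
    (x : signedIndicators hsign) : (stabilizer Γ x : Set Γ).Finite := by
  rw [SubMulAction.stabilizer_of_subMul]
  obtain ⟨c, s, rfl | rfl⟩ := x
  · exact hstab s
  · convert hstab s using 1
    ext γ
    simp [mem_stabilizer_iff, smul_neg]

variable {V : Type*} [AddCommGroup V] [Module ℝ V]

noncomputable def oddLinearExtension (Ψ : signedIndicators hsign → V) : (S →₀ ℝ) →ₗ[ℝ] V :=
  Finsupp.linearCombination ℝ fun s =>
    (2 : ℝ)⁻¹ • (Ψ ⟨_, single_mem_signedIndicators hsign s⟩ -
      Ψ ⟨_, neg_mem_signedIndicators hsign (single_mem_signedIndicators hsign s)⟩)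

theorem oddLinearExtension_apply (Ψ : signedIndicators hsign → V) (x : signedIndicators hsign) :
    oddLinearExtension hsign Ψ x =
      (2 : ℝ)⁻¹ • (Ψ x - Ψ ⟨-x, neg_mem_signedIndicators hsign x.2⟩) := by
  obtain ⟨c, s, rfl | rfl⟩ := x
  · simp [oddLinearExtension]
  · simp only [oddLinearExtension, map_neg, Finsupp.linearCombination_single, one_smul]
    rw [← smul_neg, neg_sub]
    congr 3
    simp

theorem oddLinearExtension_smul [SMulCommClass Γ ℝ (S →₀ ℝ)] [DistribMulAction Γ V]
    [SMulCommClass Γ ℝ V] (Ψ : signedIndicators hsign → V)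
    (hΨ : ∀ (γ : Γ) x, Ψ (γ • x) = γ • Ψ x) (γ : Γ) (c : S →₀ ℝ) :
    oddLinearExtension hsign Ψ (γ • c) = γ • oddLinearExtension hsign Ψ c := by
  suffices oddLinearExtension hsign Ψ ∘ₗ DistribSMul.toLinearMap ℝ (S →₀ ℝ) γ =
      DistribSMul.toLinearMap ℝ V γ ∘ₗ oddLinearExtension hsign Ψ from
    LinearMap.congr_fun this c
  refine Finsupp.basisSingleOne.ext fun s => ?_
  have key (x : signedIndicators hsign) :
      oddLinearExtension hsign Ψ ↑(γ • x) = γ • oddLinearExtension hsign Ψ x := by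
    have hneg : (⟨-↑(γ • x), neg_mem_signedIndicators hsign (γ • x).2⟩ : signedIndicators hsign) =
        γ • ⟨-x, neg_mem_signedIndicators hsign x.2⟩ :=
      Subtype.ext (smul_neg γ _).symm
    rw [oddLinearExtension_apply, oddLinearExtension_apply, hneg, hΨ, hΨ, ← smul_sub,
      smul_comm γ (2⁻¹ : ℝ)]
  simpa using key ⟨_, single_mem_signedIndicators hsign s⟩

theorem map_oddLinearExtension {W : Type*} [AddCommGroup W] [Module ℝ W]
    (φ : V →ₗ[ℝ] W) (f : (S →₀ ℝ) →ₗ[ℝ] W) (Ψ : signedIndicators hsign → V)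
    (hΨ : ∀ x, φ (Ψ x) = f x) (c : S →₀ ℝ) :
    φ (oddLinearExtension hsign Ψ c) = f c := by
  suffices φ ∘ₗ oddLinearExtension hsign Ψ = f from LinearMap.congr_fun this c
  refine Finsupp.basisSingleOne.ext fun s => ?_
  simp only [LinearMap.comp_apply, Finsupp.coe_basisSingleOne]
  rw [← show ((⟨_, single_mem_signedIndicators hsign s⟩ : signedIndicators hsign) : S →₀ ℝ) =
      Finsupp.single s 1 from rfl,
    oddLinearExtension_apply, map_smul, map_sub, hΨ, hΨ, map_neg, sub_neg_eq_add, ← two_smul ℝ,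
    smul_smul, inv_mul_cancel₀ two_ne_zero, one_smul]

theorem norm_oddLinearExtension_le {E : Type*} [SeminormedAddCommGroup E] [NormedSpace ℝ E]
    (Ψ : signedIndicators hsign → E) {B : ℝ} (hB : ∀ x, ‖Ψ x‖ ≤ B) (c : S →₀ ℝ) :
    ‖oddLinearExtension hsign Ψ c‖ ≤ B * l1Norm c := by
  refine norm_linearCombination_le (fun s => ?_) c
  rw [norm_smul, norm_inv, Real.norm_ofNat, inv_mul_le_iff₀ two_pos, two_mul]
  exact (norm_sub_le _ _).trans (add_le_add (hB _) (hB _))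

end SignedIndicators

theorem b_projective_of_signed_indicator_action_general
    {Γ : Type} [Group Γ] {S : Type}
    [DistribMulAction Γ (S →₀ ℝ)] [SMulCommClass Γ ℝ (S →₀ ℝ)]
    (hsign : ∀ (γ : Γ) (s : S), ∃ t : S,
      γ • Finsupp.single s (1 : ℝ) = Finsupp.single t (1 : ℝ) ∨
      γ • Finsupp.single s (1 : ℝ) = - Finsupp.single t (1 : ℝ))
    (hstab : ∀ s : S, {γ : Γ | γ • Finsupp.single s (1 : ℝ) = Finsupp.single s (1 : ℝ)}.Finite)
    (V W : Type) [NormedAddCommGroup V] [NormedSpace ℝ V]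
    [NormedAddCommGroup W] [NormedSpace ℝ W]
    [DistribMulAction Γ V] [SMulCommClass Γ ℝ V]
    [DistribMulAction Γ W]
    (hV : ∃ L : ℝ, ∀ (γ : Γ) (v : V), ‖γ • v‖ ≤ L * ‖v‖)
    (φ : V →L[ℝ] W)
    (hφsurj : Function.Surjective φ)
    (hφequiv : ∀ (γ : Γ) (v : V), φ (γ • v) = γ • φ v)
    (hφundist : ∃ K : ℝ, 0 < K ∧ ∀ w : W, (∃ v, φ v = w) → ∃ v, φ v = w ∧ ‖v‖ ≤ K * ‖w‖)
    (f : (S →₀ ℝ) →ₗ[ℝ] W)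
    (hfbdd : ∃ C : ℝ, ∀ c : S →₀ ℝ, ‖f c‖ ≤ C * l1Norm c)
    (hfequiv : ∀ (γ : Γ) (c : S →₀ ℝ), f (γ • c) = γ • f c) :
    ∃ ft : (S →₀ ℝ) →ₗ[ℝ] V,
      (∃ C : ℝ, ∀ c : S →₀ ℝ, ‖ft c‖ ≤ C * l1Norm c) ∧
      (∀ (γ : Γ) (c : S →₀ ℝ), ft (γ • c) = γ • ft c) ∧
      (∀ c : S →₀ ℝ, φ (ft c) = f c) := by
  obtain ⟨K, hK0, hK⟩ := hφundist
  obtain ⟨L, hL⟩ := hV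
  obtain ⟨C, hC⟩ := hfbdd
  have hL' (γ : Γ) (v : V) : ‖γ • v‖ ≤ max L 0 * ‖v‖ :=
    (hL γ v).trans (mul_le_mul_of_nonneg_right (le_max_left L 0) (norm_nonneg v))
  have hfX (x : signedIndicators hsign) : ‖f x‖ ≤ C := by
    simpa [l1Norm_of_mem_signedIndicators hsign x.2] using hC x
  choose v₀ hφv₀ hv₀ using fun x : signedIndicators hsign => hK (f x) (hφsurj _)
  have hfin := finite_stabilizer_signedIndicators hsign hstab
  set Ψ := averagedLift hfin v₀
  have hφΨ : ∀ x, φ (Ψ x) = f x := map_averagedLift hfin (φ : V →ₗ[ℝ] W) hφequiv (fun x => f x)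
    (fun γ x => hfequiv γ x) v₀ hφv₀
  have hΨ : ∀ x, ‖Ψ x‖ ≤ max L 0 * (K * C) := norm_averagedLift_le hfin (le_max_right L 0) hL' v₀
    fun x => (hv₀ x).trans (mul_le_mul_of_nonneg_left (hfX x) hK0.le)
  exact ⟨oddLinearExtension hsign Ψ, ⟨_, norm_oddLinearExtension_le hsign Ψ hΨ⟩,
    oddLinearExtension_smul hsign Ψ (averagedLift_smul hfin v₀),
    map_oddLinearExtension hsign _ f Ψ hφΨ⟩

/-- normed version of Lemma 52 of Mineyev–Yaman:
`P = S →₀ ℝ` with the `ℓ¹` norm, with a linear `Γ`-action sending indicators to signed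
indicators and with finite stabilizers of indicators, is `b`-projective: every bounded
`Γ`-equivariant map `f : P → W` lifts along a surjective undistorted bounded `Γ`-equivariant
map `φ : V → W` to a bounded `Γ`-equivariant map `f̃ : P → V`. -/
theorem b_projective_of_signed_indicator_action
    {Γ : Type} [Group Γ] {S : Type}
    [DistribMulAction Γ (S →₀ ℝ)] [SMulCommClass Γ ℝ (S →₀ ℝ)]
    (hsign : ∀ (γ : Γ) (s : S), ∃ t : S,
      γ • Finsupp.single s (1 : ℝ) = Finsupp.single t (1 : ℝ) ∨
      γ • Finsupp.single s (1 : ℝ) = - Finsupp.single t (1 : ℝ))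
    (hstab : ∀ s : S, {γ : Γ | γ • Finsupp.single s (1 : ℝ) = Finsupp.single s (1 : ℝ)}.Finite)
    (V W : Type) [NormedAddCommGroup V] [NormedSpace ℝ V]
    [NormedAddCommGroup W] [NormedSpace ℝ W]
    [DistribMulAction Γ V] [SMulCommClass Γ ℝ V]
    [DistribMulAction Γ W] [SMulCommClass Γ ℝ W]
    (hV : ∃ L : ℝ, ∀ (γ : Γ) (v : V), ‖γ • v‖ ≤ L * ‖v‖)
    (hW : ∃ L : ℝ, ∀ (γ : Γ) (w : W), ‖γ • w‖ ≤ L * ‖w‖)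
    (φ : V →L[ℝ] W)
    (hφsurj : Function.Surjective φ)
    (hφequiv : ∀ (γ : Γ) (v : V), φ (γ • v) = γ • φ v)
    (hφundist : ∃ K : ℝ, 0 < K ∧ ∀ w : W, (∃ v, φ v = w) → ∃ v, φ v = w ∧ ‖v‖ ≤ K * ‖w‖)
    (f : (S →₀ ℝ) →ₗ[ℝ] W)
    (hfbdd : ∃ C : ℝ, ∀ c : S →₀ ℝ, ‖f c‖ ≤ C * l1Norm c)
    (hfequiv : ∀ (γ : Γ) (c : S →₀ ℝ), f (γ • c) = γ • f c) :
    ∃ ft : (S →₀ ℝ) →ₗ[ℝ] V,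
      (∃ C : ℝ, ∀ c : S →₀ ℝ, ‖ft c‖ ≤ C * l1Norm c) ∧
      (∀ (γ : Γ) (c : S →₀ ℝ), ft (γ • c) = γ • ft c) ∧
      (∀ c : S →₀ ℝ, φ (ft c) = f c) :=
  b_projective_of_signed_indicator_action_general hsign hstab V W hV φ hφsurj hφequiv hφundist f
    hfbdd hfequiv
end

section
/- Let S be a type, and let ∂ : ((S × S) →₀ ℝ) → (S →₀ ℝ) be the linear map sending the indicator of a pair (x, y) to (indicator of y) − (indicator of x). Then for every finitely supported function c : S →₀ ℝ whose coefficients sum to 0, there exists a : (S × S) →₀ ℝ with ∂a = c and ‖a‖₁ ≤ ‖c‖₁. -/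
/-- The boundary map `∂ : C₁(S) → C₀(S)` sending the indicator of `(x, y)` to
`(indicator of y) − (indicator of x)`. -/
noncomputable def bdryOne (S : Type) : ((S × S) →₀ ℝ) →ₗ[ℝ] (S →₀ ℝ) :=
  Finsupp.linearCombination ℝ fun p : S × S =>
    Finsupp.single p.2 (1 : ℝ) - Finsupp.single p.1 (1 : ℝ)

open Finsupp

section L1Norm

variable {T : Type}

theorem l1Norm_eq_sum_of_support_subset (c : T →₀ ℝ) {s : Finset T} (h : c.support ⊆ s) :
    l1Norm c = ∑ t ∈ s, |c t| :=
  Finset.sum_subset h fun t _ ht => by simp [notMem_support_iff.mp ht]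

theorem l1Norm_zero : l1Norm (0 : T →₀ ℝ) = 0 := rfl

theorem l1Norm_nonneg (c : T →₀ ℝ) : 0 ≤ l1Norm c :=
  Finset.sum_nonneg fun t _ => abs_nonneg (c t)

theorem l1Norm_single (t : T) (r : ℝ) : l1Norm (single t r) = |r| := by
  classical
  rw [l1Norm_eq_sum_of_support_subset _ support_single_subset]
  simp

theorem l1Norm_add_le (a b : T →₀ ℝ) : l1Norm (a + b) ≤ l1Norm a + l1Norm b := by
  classical
  rw [l1Norm_eq_sum_of_support_subset (a + b) support_add,
    l1Norm_eq_sum_of_support_subset a Finset.subset_union_left,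
    l1Norm_eq_sum_of_support_subset b Finset.subset_union_right, ← Finset.sum_add_distrib]
  exact Finset.sum_le_sum fun t _ => abs_add_le (a t) (b t)

theorem l1Norm_sum_le {ι : Type*} (s : Finset ι) (f : ι → T →₀ ℝ) :
    l1Norm (∑ i ∈ s, f i) ≤ ∑ i ∈ s, l1Norm (f i) :=
  Finset.le_sum_of_subadditive _ l1Norm_zero.le l1Norm_add_le s f

theorem l1Norm_smul (r : ℝ) (c : T →₀ ℝ) : l1Norm (r • c) = |r| * l1Norm c := by
  rw [l1Norm_eq_sum_of_support_subset _ support_smul, l1Norm, Finset.mul_sum]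
  simp [abs_mul]

theorem l1Norm_eq_degree_of_nonneg {c : T →₀ ℝ} (hc : 0 ≤ c) : l1Norm c = c.degree :=
  Finset.sum_congr rfl fun t _ => abs_of_nonneg (hc t)

theorem l1Norm_eq_zero {c : T →₀ ℝ} : l1Norm c = 0 ↔ c = 0 := by
  refine ⟨fun h => ?_, fun h => h ▸ l1Norm_zero⟩
  ext t
  by_contra ht
  have hct : |c t| = 0 :=
    (Finset.sum_eq_zero_iff_of_nonneg fun t _ => abs_nonneg (c t)).mp h t (mem_support_iff.mpr ht)
  exact ht (abs_eq_zero.mp hct)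

theorem support_posPart_subset (c : T →₀ ℝ) : c⁺.support ⊆ c.support := fun t ht => by
  rw [mem_support_iff] at ht ⊢
  exact fun h => ht (show (c t)⁺ = 0 by simp [h])

theorem support_negPart_subset (c : T →₀ ℝ) : c⁻.support ⊆ c.support := fun t ht => by
  rw [mem_support_iff] at ht ⊢
  exact fun h => ht (show (c t)⁻ = 0 by simp [h])

theorem l1Norm_eq_degree_posPart_add_degree_negPart (c : T →₀ ℝ) :
    l1Norm c = c⁺.degree + c⁻.degree := by
  rw [degree_apply, degree_apply,
    Finset.sum_subset (support_posPart_subset c) fun t _ ht => notMem_support_iff.mp ht,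
    Finset.sum_subset (support_negPart_subset c) fun t _ ht => notMem_support_iff.mp ht,
    ← Finset.sum_add_distrib]
  exact Finset.sum_congr rfl fun t _ => (posPart_add_negPart (c t)).symm

theorem sum_single_mul_eq_smul (b : T →₀ ℝ) (r : ℝ) :
    (b.sum fun t s => single t (r * s)) = r • b := by
  simp_rw [← smul_eq_mul, ← smul_single, ← smul_sum, sum_single]

end L1Norm

section Filling

variable {S : Type}

theorem bdryOne_single (x y : S) (r : ℝ) :
    bdryOne S (single (x, y) r) = single y r - single x r := by
  simp [bdryOne, smul_sub]

noncomputable def outerProd (a b : S →₀ ℝ) : (S × S) →₀ ℝ :=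
  a.sum fun x r => b.sum fun y s => single (x, y) (r * s)

theorem bdryOne_outerProd (a b : S →₀ ℝ) :
    bdryOne S (outerProd a b) = a.degree • b - b.degree • a := by
  have row (x : S) (r : ℝ) : (b.sum fun y s => single y (r * s) - single x (r * s)) =
      r • b - single x (b.degree * r) := by
    rw [sum_sub, sum_single_mul_eq_smul, ← single_sum, ← mul_sum, mul_comm]
    rfl
  simp only [outerProd, map_finsuppSum, bdryOne_single, row, sum_sub, sum_single_mul_eq_smul]
  exact congrArg (· - _) (Finset.sum_smul ..).symm

theorem l1Norm_outerProd_le (a b : S →₀ ℝ) : l1Norm (outerProd a b) ≤ l1Norm a * l1Norm b :=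
  calc l1Norm (outerProd a b)
      ≤ ∑ x ∈ a.support, l1Norm (b.sum fun y s => single (x, y) (a x * s)) :=
        l1Norm_sum_le _ _
    _ ≤ ∑ x ∈ a.support, ∑ y ∈ b.support, |a x * b y| := by
      gcongr with x
      exact (l1Norm_sum_le _ _).trans_eq (Finset.sum_congr rfl fun y _ => l1Norm_single _ _)
    _ = l1Norm a * l1Norm b := by simp_rw [abs_mul, l1Norm, Finset.sum_mul_sum]

/-- Mineyev–Yaman's `Φ(c) = (∑ α⁺)⁻¹ ∑ α_x⁻ α_y⁺ (x, y)`, with `α± = c±`; `degree` sums the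
coefficients. -/
noncomputable def contractingChain (c : S →₀ ℝ) : (S × S) →₀ ℝ :=
  c⁺.degree⁻¹ • outerProd c⁻ c⁺

theorem degree_negPart_eq_degree_posPart {c : S →₀ ℝ} (hc : c.degree = 0) :
    c⁻.degree = c⁺.degree :=
  (sub_eq_zero.mp (by rw [← map_sub, posPart_sub_negPart, hc])).symm

theorem bdryOne_contractingChain {c : S →₀ ℝ} (hc : c.degree = 0) :
    bdryOne S (contractingChain c) = c := by
  have hmass := degree_negPart_eq_degree_posPart hc
  rw [contractingChain, map_smul, bdryOne_outerProd, hmass, ← smul_sub, posPart_sub_negPart,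
    smul_smul]
  rcases eq_or_ne c⁺.degree 0 with h0 | h0
  · have hc0 : l1Norm c = 0 := by
      rw [l1Norm_eq_degree_posPart_add_degree_negPart, hmass, h0, add_zero]
    simp [l1Norm_eq_zero.mp hc0]
  · rw [inv_mul_cancel₀ h0, one_smul]

theorem l1Norm_contractingChain_le {c : S →₀ ℝ} (hc : c.degree = 0) :
    l1Norm (contractingChain c) ≤ l1Norm c / 2 := by
  have hpos : l1Norm c⁺ = c⁺.degree := l1Norm_eq_degree_of_nonneg (posPart_nonneg c)
  have hneg : l1Norm c⁻ = c⁺.degree := by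
    rw [l1Norm_eq_degree_of_nonneg (negPart_nonneg c), degree_negPart_eq_degree_posPart hc]
  set P := c⁺.degree
  have hP : 0 ≤ P := hpos ▸ l1Norm_nonneg _
  calc l1Norm (contractingChain c)
      ≤ P⁻¹ * (l1Norm c⁻ * l1Norm c⁺) := by
        rw [contractingChain, l1Norm_smul, abs_of_nonneg (inv_nonneg.mpr hP)]
        gcongr
        exact l1Norm_outerProd_le _ _
    _ = P⁻¹ * (P * P) := by rw [hneg, hpos]
    _ ≤ P := by
        rcases hP.eq_or_lt with h0 | h0
        · simp [← h0]
        · rw [inv_mul_cancel_left₀ h0.ne']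
    _ = l1Norm c / 2 := by
        rw [l1Norm_eq_degree_posPart_add_degree_negPart, degree_negPart_eq_degree_posPart hc]
        ring

end Filling

/-- existence form of the contracting chain `Φ` of Mineyev–Yaman:
every finitely supported real function on `S` whose coefficients sum to `0` has a filling
`a` with `∂a = c` and `‖a‖₁ ≤ ‖c‖₁`. -/
theorem exists_filling_of_sum_zero {S : Type} (c : S →₀ ℝ)
    (hc : (c.sum fun _ r => r) = 0) :
    ∃ a : (S × S) →₀ ℝ, bdryOne S a = c ∧ l1Norm a ≤ l1Norm c :=
  ⟨contractingChain c, bdryOne_contractingChain hc,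
    (l1Norm_contractingChain_le hc).trans (half_le_self (l1Norm_nonneg c))⟩
end

section
/- Let α and β be types and d : β → (α →₀ ℚ) a function. Let D_ℚ : (β →₀ ℚ) → (α →₀ ℚ) be the unique ℚ-linear map with D_ℚ(single b) = d(b) for every b ∈ β, and let D_ℝ : (β →₀ ℝ) → (α →₀ ℝ) be the unique ℝ-linear map with D_ℝ(single b) equal to the coefficientwise real coercion of d(b). Let γ : α →₀ ℚ be such that its real coercion γ_ℝ lies in the range of D_ℝ. Then γ lies in the range of D_ℚ, and inf{‖μ‖₁ : μ : β →₀ ℝ, D_ℝ(μ) = γ_ℝ} = inf{‖ν‖₁ : ν : β →₀ ℚ, D_ℚ(ν) = γ}, where for a rational finitely supported function ν the quantity ‖ν‖₁ is the real number ∑_{b ∈ support(ν)} |ν(b)|. -/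
/-!
A `ℚ`-linear map `f : ℝ → ℚ` with `f 1 = 1`, applied coefficientwise, sends real fillings of `γ`
to rational fillings, because the boundary map has rational coefficients. Such maps approximate
the identity on any finite set of reals: for a Hamel basis `B` of `ℝ` over `ℚ`, the map
`B.constr ℚ r` depends continuously on `r`, is the identity at `r = B`, and is `ℚ`-valued when
`r` is; rational `r` near `B` followed by normalisation at `1` does the job. Applied to the
coefficients of a real filling `μ`, this yields rational fillings of `ℓ¹` norm at most `‖μ‖₁ + ε`.
-/

/-- The rational boundary map determined by `d : β → (α →₀ ℚ)`. -/
noncomputable def DQ {α β : Type} (d : β → (α →₀ ℚ)) : (β →₀ ℚ) →ₗ[ℚ] (α →₀ ℚ) :=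
  Finsupp.linearCombination ℚ d

/-- The real boundary map determined by `d : β → (α →₀ ℚ)`, obtained by coercing
coefficients to `ℝ`. -/
noncomputable def DR {α β : Type} (d : β → (α →₀ ℚ)) : (β →₀ ℝ) →ₗ[ℝ] (α →₀ ℝ) :=
  Finsupp.linearCombination ℝ fun b =>
    (d b).mapRange (fun q : ℚ => (q : ℝ)) (by norm_num)

open Filter Topology Module

theorem Module.Basis.continuous_constr_apply {ι R S M N : Type*} [Semiring R] [Semiring S]
    [AddCommMonoid M] [Module R M] [AddCommMonoid N] [Module R N] [Module S N]
    [SMulCommClass R S N] [TopologicalSpace N] [ContinuousAdd N] [ContinuousConstSMul R N]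
    (B : Basis ι R M) (x : M) :
    Continuous fun f : ι → N => B.constr S f x := by
  simp only [Basis.constr_apply, Finsupp.sum]
  fun_prop

theorem Real.exists_ratLinearMap_approx_id (s : Finset ℝ) {ε : ℝ} (hε : 0 < ε) :
    ∃ f : ℝ →ₗ[ℚ] ℚ, f 1 = 1 ∧ ∀ y ∈ s, |(f y : ℝ) - y| < ε := by
  let B := Basis.ofVectorSpace ℚ ℝ
  have hlim : ∀ y, Tendsto (fun r => B.constr ℚ r y) (𝓝 ⇑B) (𝓝 y) := fun y => by
    have hB : B.constr ℚ B y = y := LinearMap.congr_fun (B.constr_self ℚ LinearMap.id) y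
    simpa only [hB] using (B.continuous_constr_apply (S := ℚ) y).tendsto B
  have hev : ∀ᶠ r in 𝓝 ⇑B, B.constr ℚ r 1 ≠ 0 ∧
      ∀ y ∈ s, |B.constr ℚ r y / B.constr ℚ r 1 - y| < ε := by
    refine (hlim 1).eventually_ne one_ne_zero |>.and <| (eventually_all_finset s).2 fun y _ => ?_
    have := Metric.tendsto_nhds.1 ((hlim y).div (hlim 1) one_ne_zero) ε hε
    simpa only [div_one, Real.dist_eq, Pi.div_apply] using this
  obtain ⟨q, h1, hs⟩ :=
    (DenseRange.piMap fun _ : Basis.ofVectorSpaceIndex ℚ ℝ => Rat.denseRange_cast).mem_nhds hev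
  have hcast : ∀ y, B.constr ℚ (Pi.map (fun _ => ((↑) : ℚ → ℝ)) q) y = (B.constr ℚ q y : ℝ) :=
    fun y => by simp [Basis.constr_apply, Finsupp.sum, Rat.smul_def]
  simp only [hcast] at h1 hs
  refine ⟨(B.constr ℚ q 1)⁻¹ • B.constr ℚ q, ?_, fun y hy => ?_⟩
  · simp [inv_mul_cancel₀ (by exact_mod_cast h1 : B.constr ℚ q 1 ≠ 0)]
  · simpa [div_eq_inv_mul] using hs y hy

theorem Real.sInf_eq_of_subset_of_forall_exists_le_add {A B : Set ℝ} (hBA : B ⊆ A)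
    (hA : BddBelow A) (h : ∀ a ∈ A, ∀ ε > 0, ∃ b ∈ B, b ≤ a + ε) : sInf A = sInf B := by
  rcases A.eq_empty_or_nonempty with rfl | ⟨a, ha⟩
  · rw [Set.subset_empty_iff.1 hBA]
  have hB : B.Nonempty := let ⟨b, hb, _⟩ := h a ha 1 one_pos; ⟨b, hb⟩
  refine le_antisymm (csInf_le_csInf hA hB hBA) (le_csInf ⟨a, ha⟩ fun a ha => ?_)
  refine le_of_forall_pos_le_add fun ε hε => ?_
  obtain ⟨b, hb, hba⟩ := h a ha ε hε
  exact (csInf_le (hA.mono hBA) hb).trans hba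

section Filling

variable {α β : Type} (d : β → (α →₀ ℚ))

theorem DR_mapRange_ratCast (ν : β →₀ ℚ) :
    DR d (ν.mapRange (fun q : ℚ => (q : ℝ)) Rat.cast_zero) =
      (DQ d ν).mapRange (fun q : ℚ => (q : ℝ)) Rat.cast_zero := by
  induction ν using Finsupp.induction_linear with
  | zero => simp
  | add f g hf hg => simp only [Finsupp.mapRange_add (Rat.cast_add (α := ℝ)), map_add, hf, hg]
  | single b q => ext a; simp [DR, DQ]

theorem DQ_mapRange (f : ℝ →ₗ[ℚ] ℚ) (μ : β →₀ ℝ) :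
    DQ d (μ.mapRange f f.map_zero) = (DR d μ).mapRange f f.map_zero := by
  induction μ using Finsupp.induction_linear with
  | zero => simp
  | add g h hg hh => simp only [Finsupp.mapRange_add f.map_add, map_add, hg, hh]
  | single b r =>
    ext a
    simp only [DR, DQ, Finsupp.mapRange_single, Finsupp.linearCombination_single,
      Finsupp.smul_apply, Finsupp.mapRange_apply, smul_eq_mul]
    rw [mul_comm r, ← Rat.smul_def, map_smul, smul_eq_mul, mul_comm]

theorem mapRange_mapRange_ratCast {f : ℝ →ₗ[ℚ] ℚ} (hf : f 1 = 1) (γ : α →₀ ℚ) :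
    (γ.mapRange (fun q : ℚ => (q : ℝ)) Rat.cast_zero).mapRange f f.map_zero = γ := by
  ext a
  rw [Finsupp.mapRange_apply, Finsupp.mapRange_apply, ← mul_one (γ a : ℝ), ← Rat.smul_def,
    map_smul, hf, smul_eq_mul, mul_one]

theorem exists_rat_filling_le_add {γ : α →₀ ℚ} {μ : β →₀ ℝ}
    (hμ : DR d μ = γ.mapRange (fun q : ℚ => (q : ℝ)) Rat.cast_zero) {ε : ℝ} (hε : 0 < ε) :
    ∃ ν : β →₀ ℚ, DQ d ν = γ ∧ ∑ b ∈ ν.support, |(ν b : ℝ)| ≤ ∑ b ∈ μ.support, |μ b| + ε := by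
  set n : ℕ := μ.support.card
  obtain ⟨f, hf1, hf⟩ := Real.exists_ratLinearMap_approx_id (μ.support.image μ)
    (div_pos hε (n.cast_add_one_pos : (0 : ℝ) < n + 1))
  refine ⟨μ.mapRange f f.map_zero, by rw [DQ_mapRange, hμ, mapRange_mapRange_ratCast hf1], ?_⟩
  have hclose : ∀ b ∈ μ.support, |(f (μ b) : ℝ)| ≤ |μ b| + ε / (n + 1) := fun b hb => by
    have := (abs_sub_abs_le_abs_sub _ _).trans (hf _ (Finset.mem_image_of_mem μ hb)).le
    linarith
  calc ∑ b ∈ (μ.mapRange f f.map_zero).support, |(f (μ b) : ℝ)|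
      ≤ ∑ b ∈ μ.support, |(f (μ b) : ℝ)| :=
        Finset.sum_le_sum_of_subset_of_nonneg Finsupp.support_mapRange fun _ _ _ => abs_nonneg _
    _ ≤ ∑ b ∈ μ.support, (|μ b| + ε / (n + 1)) := Finset.sum_le_sum hclose
    _ = ∑ b ∈ μ.support, |μ b| + n / (n + 1) * ε := by
        rw [Finset.sum_add_distrib, Finset.sum_const, nsmul_eq_mul]; ring
    _ ≤ ∑ b ∈ μ.support, |μ b| + ε := by
        gcongr
        exact mul_le_of_le_one_left hε.le ((div_le_one (by positivity)).2 (by linarith))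

end Filling

/-- rational and real filling norms coincide: if the real coercion of a
rational chain `γ` bounds over `ℝ`, then `γ` bounds over `ℚ`, and the real and rational
filling (ℓ¹) norms of `γ` agree. -/
theorem rat_real_filling_norms_eq {α β : Type} (d : β → (α →₀ ℚ)) (γ : α →₀ ℚ)
    (h : γ.mapRange (fun q : ℚ => (q : ℝ)) (by norm_num) ∈ LinearMap.range (DR d)) :
    γ ∈ LinearMap.range (DQ d) ∧
    sInf {x : ℝ | ∃ μ : β →₀ ℝ,
        DR d μ = γ.mapRange (fun q : ℚ => (q : ℝ)) (by norm_num) ∧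
        x = ∑ b ∈ μ.support, |μ b|}
      = sInf {x : ℝ | ∃ ν : β →₀ ℚ, DQ d ν = γ ∧ x = ∑ b ∈ ν.support, |(ν b : ℝ)|} := by
  obtain ⟨μ, hμ⟩ := h
  obtain ⟨ν, hν, -⟩ := exists_rat_filling_le_add d hμ one_pos
  refine ⟨⟨ν, hν⟩, Real.sInf_eq_of_subset_of_forall_exists_le_add ?_ ?_ ?_⟩
  · rintro _ ⟨ν, hν, rfl⟩
    refine ⟨ν.mapRange (fun q : ℚ => (q : ℝ)) Rat.cast_zero, by rw [DR_mapRange_ratCast, hν], ?_⟩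
    rw [Finsupp.support_mapRange_of_injective _ _ Rat.cast_injective]
    rfl
  · exact ⟨0, by rintro _ ⟨μ, -, rfl⟩; positivity⟩
  · rintro _ ⟨μ, hμ, rfl⟩ ε hε
    obtain ⟨ν, hν, hle⟩ := exists_rat_filling_le_add d hμ hε
    exact ⟨_, ⟨ν, hν, rfl⟩, hle⟩
end

section
/- Let (X, d) be a metric space, let p ≥ 1, let x₁, …, x_p ∈ X, and let r > 0. Then there exist a nonempty subset I ⊆ {1, …, p} and a real number R' with r ≤ R' ≤ 3^p · r such that the closed balls B(x_i, R') for i ∈ I are pairwise disjoint and ⋃_{i=1}^p B(x_i, r) ⊆ ⋃_{i∈I} B(x_i, R'). -/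
/-!
If all balls `B(xᵢ, R)` are pairwise disjoint we are done. Otherwise two of them, around `xᵢ`
and `xⱼ`, meet; then `B(xⱼ, R) ⊆ B(xᵢ, 3R)`, so dropping `j` and tripling the radius keeps the
union covered. Each merge removes a centre, so after fewer than `p` merges the balls are
disjoint and the radius is at most `3^p r`.
-/

open Metric Finset

theorem Metric.closedBall_subset_closedBall_three_mul_of_not_disjoint {X : Type*}
    [PseudoMetricSpace X] {a b : X} {R : ℝ}
    (h : ¬Disjoint (closedBall a R) (closedBall b R)) :
    closedBall b R ⊆ closedBall a (3 * R) := by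
  have hab : dist a b ≤ R + R :=
    dist_le_add_of_nonempty_closedBall_inter_closedBall (Set.not_disjoint_iff_nonempty_inter.mp h)
  rw [dist_comm] at hab
  exact closedBall_subset_closedBall' (by linarith)

theorem Metric.biUnion_closedBall_subset_erase_of_not_disjoint {ι X : Type*}
    [PseudoMetricSpace X] [DecidableEq ι] (x : ι → X) {I : Finset ι} {i j : ι} {R : ℝ}
    (hR : 0 ≤ R) (hi : i ∈ I) (hij : i ≠ j)
    (h : ¬Disjoint (closedBall (x i) R) (closedBall (x j) R)) :
    ⋃ k ∈ I, closedBall (x k) R ⊆ ⋃ k ∈ I.erase j, closedBall (x k) (3 * R) := by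
  refine Set.iUnion₂_subset fun k hk => ?_
  by_cases hkj : k = j
  · subst hkj
    exact Set.subset_iUnion₂_of_subset i (mem_erase.mpr ⟨hij, hi⟩)
      (closedBall_subset_closedBall_three_mul_of_not_disjoint h)
  · exact Set.subset_iUnion₂_of_subset k (mem_erase.mpr ⟨hkj, hk⟩)
      (closedBall_subset_closedBall (by linarith))

theorem Metric.exists_pairwiseDisjoint_closedBall_cover {ι X : Type*} [PseudoMetricSpace X]
    (x : ι → X) (I : Finset ι) (hI : I.Nonempty) {R : ℝ} (hR : 0 ≤ R) :
    ∃ J : Finset ι, J.Nonempty ∧ ∃ R', R ≤ R' ∧ R' ≤ 3 ^ #I * R ∧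
      (J : Set ι).PairwiseDisjoint (fun i => closedBall (x i) R') ∧
      ⋃ i ∈ I, closedBall (x i) R ⊆ ⋃ i ∈ J, closedBall (x i) R' := by
  classical
  induction I using Finset.strongInduction generalizing R with
  | H I ih =>
    by_cases hdisj : (I : Set ι).PairwiseDisjoint (fun i => closedBall (x i) R)
    · exact ⟨I, hI, R, le_rfl, le_mul_of_one_le_left hR (one_le_pow₀ (by norm_num)), hdisj,
        subset_rfl⟩
    obtain ⟨i, hi, j, hj, hij, hmeet⟩ : ∃ i ∈ I, ∃ j ∈ I, i ≠ j ∧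
        ¬Disjoint (closedBall (x i) R) (closedBall (x j) R) := by
      simpa [Set.PairwiseDisjoint, Set.Pairwise] using hdisj
    obtain ⟨J, hJ, R', hRR', hR'le, hJdisj, hcover⟩ :=
      ih (I.erase j) (erase_ssubset hj) ⟨i, mem_erase.mpr ⟨hij, hi⟩⟩
        (R := 3 * R) (by positivity)
    refine ⟨J, hJ, R', by linarith, ?_, hJdisj,
      (biUnion_closedBall_subset_erase_of_not_disjoint x hR hi hij hmeet).trans hcover⟩
    calc R' ≤ 3 ^ #(I.erase j) * (3 * R) := hR'le
      _ = 3 ^ (#(I.erase j) + 1) * R := by ring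
      _ = 3 ^ #I * R := by rw [card_erase_add_one hj]

/-- ball merging: given `p ≥ 1` points in a metric space and `r > 0`, there
are a nonempty subset `I` of the indices and a radius `R'` with `r ≤ R' ≤ 3^p · r` such that
the closed balls of radius `R'` around the points indexed by `I` are pairwise disjoint and
cover the union of the original balls of radius `r`. -/
theorem exists_disjoint_cover_balls {X : Type} [MetricSpace X]
    (p : ℕ) (hp : 1 ≤ p) (x : Fin p → X) (r : ℝ) (hr : 0 < r) :
    ∃ (I : Finset (Fin p)) (R' : ℝ), I.Nonempty ∧ r ≤ R' ∧ R' ≤ 3 ^ p * r ∧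
      (∀ i ∈ I, ∀ j ∈ I, i ≠ j →
        Disjoint (Metric.closedBall (x i) R') (Metric.closedBall (x j) R')) ∧
      (⋃ i, Metric.closedBall (x i) r) ⊆ ⋃ i ∈ I, Metric.closedBall (x i) R' := by
  have : Nonempty (Fin p) := ⟨⟨0, hp⟩⟩
  obtain ⟨I, hI, R', hrR', hR'le, hdisj, hcover⟩ :=
    exists_pairwiseDisjoint_closedBall_cover x univ univ_nonempty hr.le
  refine ⟨I, R', hI, hrR', by simpa using hR'le, fun i hi j hj hij => hdisj hi hj hij, ?_⟩
  simpa using hcover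
end

section
/- Let δ > 0 and let X be a geodesic metric space in which every geodesic triangle is δ-slim. Let v₁, v₂, v₃ ∈ X, let σ₁₂, σ₁₃, σ₂₃ be geodesic segments joining v₁v₂, v₁v₃, v₂v₃ respectively, and let x be a point on σ₁₂ with d(x, σ₁₃) ≤ δ and d(x, σ₂₃) ≤ δ. Let R ≥ 10δ, and let τ be a geodesic segment from x to v₃. For i = 1, 2 let v_i' be the point of σ₁₂ on the subsegment from x to v_i at distance R from x (when d(x, v_i) ≥ R), and let v₃' be the point of τ at distance R from x (when d(x, v₃) ≥ R); let γ_i denote the subsegment from v_i' to v_i of the corresponding geodesic (γ_i := ∅ when d(x, v_i) < R). Then: (a) d(v_i', v_j') ≥ 2R − 6δ for all i ≠ j for which both points are defined; (b) σ₁₂ ∪ σ₁₃ ∪ σ₂₃ ⊆ B(x, R + δ) ∪ N_δ(γ₁) ∪ N_δ(γ₂) ∪ N_δ(γ₃). -/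
/-- The closed `r`-neighborhood of a subset of a metric space (empty if `A` is empty). -/
def cnbhd {X : Type*} [MetricSpace X] (r : ℝ) (A : Set X) : Set X :=
  {x | ∃ a ∈ A, dist x a ≤ r}

/-- `γ` is (the image of) a geodesic segment from `x` to `y`. -/
def IsGeodesicFrom {X : Type*} [MetricSpace X] (γ : Set X) (x y : X) : Prop :=
  ∃ f : ℝ → X, f 0 = x ∧ f (dist x y) = y ∧
    (∀ s ∈ Set.Icc (0 : ℝ) (dist x y), ∀ t ∈ Set.Icc (0 : ℝ) (dist x y),
      dist (f s) (f t) = |s - t|) ∧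
    γ = f '' Set.Icc (0 : ℝ) (dist x y)

/-- A metric space is geodesic if every two points are joined by a geodesic segment. -/
def GeodesicSpace (X : Type*) [MetricSpace X] : Prop :=
  ∀ x y : X, ∃ γ : Set X, IsGeodesicFrom γ x y

/-- Every geodesic triangle of `X` is `δ`-slim. -/
def SlimTriangles (X : Type*) [MetricSpace X] (δ : ℝ) : Prop :=
  ∀ (x y z : X) (A B C : Set X),
    IsGeodesicFrom A x y → IsGeodesicFrom B y z → IsGeodesicFrom C x z →
      A ⊆ cnbhd δ (B ∪ C) ∧ B ⊆ cnbhd δ (A ∪ C) ∧ C ⊆ cnbhd δ (A ∪ B)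


/-!
Cut the side `σ₁₂` at `x` and join `x` to `v₃` by `τ`. Slimness of the triangles
`(v₁, x, v₃)` and `(x, v₂, v₃)` puts `σ₁₃` and `σ₂₃` into the `δ`-neighbourhood of the three
segments issuing from `x`, and each of these lies in `B(x, R) ∪ γᵢ`. For (a), the point of
`σ₁₃` (or `σ₂₃`) that is `δ`-close to `x` shows that the path through `x` between two
vertices is at most `2δ` longer than the opposite side, so that `v_i'` and `v_j'` cannot be
closer than `2R − 2δ`.
-/

open Set Metric

variable {X : Type*} [MetricSpace X]

def IsometricOn (f : ℝ → X) (I : Set ℝ) : Prop :=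
  ∀ s ∈ I, ∀ t ∈ I, dist (f s) (f t) = |s - t|

section Neighborhood

variable {r : ℝ} {A B : Set X}

theorem cnbhd_mono (h : A ⊆ B) : cnbhd r A ⊆ cnbhd r B :=
  fun _ ⟨a, ha, hxa⟩ => ⟨a, h ha, hxa⟩

theorem cnbhd_union : cnbhd r (A ∪ B) = cnbhd r A ∪ cnbhd r B := by
  ext x
  simp only [cnbhd, mem_ofPred_eq, mem_union, or_and_right, exists_or]

theorem subset_cnbhd (hr : 0 ≤ r) : A ⊆ cnbhd r A :=
  fun a ha => ⟨a, ha, by rwa [dist_self]⟩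

theorem cnbhd_closedBall_subset (x : X) (R : ℝ) :
    cnbhd r (closedBall x R) ⊆ closedBall x (R + r) := fun y ⟨a, ha, hya⟩ =>
  mem_closedBall.2 <| (dist_triangle y a x).trans (by rw [add_comm R]; gcongr; exact ha)

end Neighborhood

namespace IsometricOn

variable {f : ℝ → X} {I J : Set ℝ} {a b c s t : ℝ}

theorem mono (hf : IsometricOn f I) (hJ : J ⊆ I) : IsometricOn f J :=
  fun s hs t ht => hf s (hJ hs) t (hJ ht)

theorem dist_eq_sub (hf : IsometricOn f I) (hs : s ∈ I) (ht : t ∈ I) (hst : s ≤ t) :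
    dist (f s) (f t) = t - s := by
  rw [hf s hs t ht, abs_sub_comm, abs_of_nonneg (sub_nonneg.2 hst)]

theorem isGeodesicFrom (hf : IsometricOn f (Icc a b)) (hab : a ≤ b) :
    IsGeodesicFrom (f '' Icc a b) (f a) (f b) := by
  have hlen : dist (f a) (f b) = b - a :=
    hf.dist_eq_sub (left_mem_Icc.2 hab) (right_mem_Icc.2 hab) hab
  refine ⟨fun u => f (a + u), by simp, by simp only [hlen, add_sub_cancel], fun s hs t ht => ?_, ?_⟩
  · rw [hlen] at hs ht
    rw [hf (a + s) ⟨by linarith [hs.1], by linarith [hs.2]⟩ (a + t)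
      ⟨by linarith [ht.1], by linarith [ht.2]⟩, add_sub_add_left_eq_sub]
  · rw [hlen, ← image_image f (a + ·), image_const_add_Icc, add_zero, add_sub_cancel]

theorem image_Icc_subset_closedBall_union_left (hf : IsometricOn f (Icc a c)) (R : ℝ) :
    f '' Icc a c ⊆ closedBall (f c) R ∪ f '' Icc a (c - R) := by
  rintro _ ⟨s, hs, rfl⟩
  by_cases hsR : s ≤ c - R
  · exact Or.inr ⟨s, ⟨hs.1, hsR⟩, rfl⟩
  · refine Or.inl (mem_closedBall.2 ?_)
    rw [hf.dist_eq_sub hs (right_mem_Icc.2 (hs.1.trans hs.2)) hs.2]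
    linarith

theorem image_Icc_subset_closedBall_union_right (hf : IsometricOn f (Icc a c)) (R : ℝ) :
    f '' Icc a c ⊆ closedBall (f a) R ∪ f '' Icc (a + R) c := by
  rintro _ ⟨s, hs, rfl⟩
  by_cases hsR : a + R ≤ s
  · exact Or.inr ⟨s, ⟨hsR, hs.2⟩, rfl⟩
  · refine Or.inl (mem_closedBall.2 ?_)
    rw [dist_comm, hf.dist_eq_sub (left_mem_Icc.2 (hs.1.trans hs.2)) hs hs.1]
    linarith

end IsometricOn

theorem ite_image_Icc_eq {α : Type*} (f : ℝ → α) {p : Prop} [Decidable p] {a b : ℝ}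
    (h : a ≤ b → p) :
    (if p then f '' Icc a b else ∅) = f '' Icc a b := by
  split_ifs with hp
  · rfl
  · rw [Icc_eq_empty (mt h hp), image_empty]

namespace IsGeodesicFrom

variable {γ α β : Set X} {p q x z : X} {δ : ℝ}

theorem symm (hγ : IsGeodesicFrom γ p q) : IsGeodesicFrom γ q p := by
  obtain ⟨f, hf0, hf1, hf, rfl⟩ := hγ
  rw [IsGeodesicFrom, dist_comm q p]
  refine ⟨fun u => f (dist p q - u), by simpa using hf1, by simpa using hf0,
    fun s hs t ht => ?_, ?_⟩
  · rw [hf _ ⟨by linarith [hs.2], by linarith [hs.1]⟩ _ ⟨by linarith [ht.2], by linarith [ht.1]⟩,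
      sub_sub_sub_cancel_left, abs_sub_comm]
  · rw [← image_image f (dist p q - ·), image_const_sub_Icc, sub_zero, sub_self]

theorem dist_add_dist_eq (hγ : IsGeodesicFrom γ p q) (hz : z ∈ γ) :
    dist p z + dist z q = dist p q := by
  obtain ⟨f, hf0, hf1, hf, rfl⟩ := hγ
  obtain ⟨u, hu, rfl⟩ := hz
  have hf' : IsometricOn f (Icc 0 (dist p q)) := hf
  have h0 := hf'.dist_eq_sub (left_mem_Icc.2 (hu.1.trans hu.2)) hu hu.1
  have h1 := hf'.dist_eq_sub hu (right_mem_Icc.2 (hu.1.trans hu.2)) hu.2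
  rw [hf0] at h0
  rw [hf1] at h1
  linarith

theorem dist_add_dist_le_of_mem_cnbhd (hγ : IsGeodesicFrom γ p q) (hx : x ∈ cnbhd δ γ) :
    dist p x + dist x q ≤ dist p q + 2 * δ := by
  obtain ⟨z, hz, hxz⟩ := hx
  have := hγ.dist_add_dist_eq hz
  linarith [dist_triangle p z x, dist_triangle x z q, dist_comm x z]

theorem two_mul_sub_le_dist_of_mem_cnbhd {p' q' : X} {R : ℝ} (hγ : IsGeodesicFrom γ p q)
    (hx : x ∈ cnbhd δ γ) (hα : IsGeodesicFrom α x p) (hp' : p' ∈ α)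
    (hβ : IsGeodesicFrom β x q) (hq' : q' ∈ β) (hxp' : dist x p' = R) (hxq' : dist x q' = R) :
    2 * R - 2 * δ ≤ dist p' q' := by
  have hpq := hγ.dist_add_dist_le_of_mem_cnbhd hx
  have hp := hα.dist_add_dist_eq hp'
  have hq := hβ.dist_add_dist_eq hq'
  linarith [dist_triangle4 p p' q' q, dist_comm x p, dist_comm p' p]

end IsGeodesicFrom

theorem SlimTriangles.tripod_subset {δ R : ℝ} (slim : SlimTriangles X δ) (hδ : 0 ≤ δ)
    {x v₁ v₂ v₃ : X} {A B C σ₁₃ σ₂₃ γ₁ γ₂ γ₃ : Set X}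
    (hA : IsGeodesicFrom A x v₁) (hB : IsGeodesicFrom B x v₂) (hC : IsGeodesicFrom C x v₃)
    (hσ₁₃ : IsGeodesicFrom σ₁₃ v₁ v₃) (hσ₂₃ : IsGeodesicFrom σ₂₃ v₂ v₃)
    (hAγ : A ⊆ closedBall x R ∪ γ₁) (hBγ : B ⊆ closedBall x R ∪ γ₂)
    (hCγ : C ⊆ closedBall x R ∪ γ₃) :
    A ∪ B ∪ σ₁₃ ∪ σ₂₃ ⊆ closedBall x (R + δ) ∪ cnbhd δ γ₁ ∪ cnbhd δ γ₂ ∪ cnbhd δ γ₃ := by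
  have h13 := (slim _ _ _ _ _ _ hA.symm hC hσ₁₃).2.2
  have h23 := (slim _ _ _ _ _ _ hB hσ₂₃ hC).2.1
  have hABC : A ∪ B ∪ σ₁₃ ∪ σ₂₃ ⊆ cnbhd δ (A ∪ B ∪ C) := by
    rw [cnbhd_union] at h13 h23 ⊢
    rw [cnbhd_union]
    rintro y (((hy | hy) | hy) | hy)
    exacts [.inl (.inl (subset_cnbhd hδ hy)), .inl (.inr (subset_cnbhd hδ hy)),
      (h13 hy).imp_left .inl, (h23 hy).imp_left .inr]
  have hcover : A ∪ B ∪ C ⊆ closedBall x R ∪ γ₁ ∪ γ₂ ∪ γ₃ := by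
    refine union_subset (union_subset (hAγ.trans ?_) (hBγ.trans ?_)) (hCγ.trans ?_) <;>
      intro y hy <;> simp only [mem_union] at hy ⊢ <;> tauto
  refine hABC.trans ((cnbhd_mono hcover).trans ?_)
  simp only [cnbhd_union]
  gcongr
  exact cnbhd_closedBall_subset x R

theorem slim_triangle_tripod_decomposition_general {X : Type} [MetricSpace X]
    (δ : ℝ) (hδ : 0 < δ) (slim : SlimTriangles X δ)
    (v₁ v₂ v₃ : X)
    (f : ℝ → X) (hf0 : f 0 = v₁) (hf1 : f (dist v₁ v₂) = v₂)
    (hfiso : ∀ s ∈ Set.Icc (0 : ℝ) (dist v₁ v₂), ∀ t ∈ Set.Icc (0 : ℝ) (dist v₁ v₂),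
      dist (f s) (f t) = |s - t|)
    (σ₁₂ : Set X) (hσ₁₂ : σ₁₂ = f '' Set.Icc (0 : ℝ) (dist v₁ v₂))
    (σ₁₃ σ₂₃ : Set X) (hσ₁₃ : IsGeodesicFrom σ₁₃ v₁ v₃) (hσ₂₃ : IsGeodesicFrom σ₂₃ v₂ v₃)
    (t₀ : ℝ) (ht₀ : t₀ ∈ Set.Icc (0 : ℝ) (dist v₁ v₂))
    (x : X) (hx : x = f t₀)
    (hx13 : x ∈ cnbhd δ σ₁₃) (hx23 : x ∈ cnbhd δ σ₂₃)
    (R : ℝ) (hR : 10 * δ ≤ R)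
    (g : ℝ → X) (hg0 : g 0 = x) (hg1 : g (dist x v₃) = v₃)
    (hgiso : ∀ s ∈ Set.Icc (0 : ℝ) (dist x v₃), ∀ t ∈ Set.Icc (0 : ℝ) (dist x v₃),
      dist (g s) (g t) = |s - t|)
    (γ₁ γ₂ γ₃ : Set X)
    (hγ₁ : γ₁ = if R ≤ t₀ then f '' Set.Icc (0 : ℝ) (t₀ - R) else ∅)
    (hγ₂ : γ₂ = if R ≤ dist v₁ v₂ - t₀ then f '' Set.Icc (t₀ + R) (dist v₁ v₂) else ∅)
    (hγ₃ : γ₃ = if R ≤ dist x v₃ then g '' Set.Icc R (dist x v₃) else ∅) :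
    ((R ≤ t₀ → R ≤ dist v₁ v₂ - t₀ →
        2 * R - 6 * δ ≤ dist (f (t₀ - R)) (f (t₀ + R))) ∧
     (R ≤ t₀ → R ≤ dist x v₃ →
        2 * R - 6 * δ ≤ dist (f (t₀ - R)) (g R)) ∧
     (R ≤ dist v₁ v₂ - t₀ → R ≤ dist x v₃ →
        2 * R - 6 * δ ≤ dist (f (t₀ + R)) (g R))) ∧
    σ₁₂ ∪ σ₁₃ ∪ σ₂₃ ⊆
      Metric.closedBall x (R + δ) ∪ cnbhd δ γ₁ ∪ cnbhd δ γ₂ ∪ cnbhd δ γ₃ := by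
  set L := dist v₁ v₂
  set D := dist x v₃
  have hf : IsometricOn f (Icc 0 L) := hfiso
  have hg : IsometricOn g (Icc 0 D) := hgiso
  obtain ⟨ht₀0, ht₀L⟩ := ht₀
  have hR0 : 0 ≤ R := by linarith
  have hxf : f t₀ = x := hx.symm
  have hA : IsGeodesicFrom (f '' Icc 0 t₀) x v₁ :=
    (hf0 ▸ hxf ▸ (hf.mono (Icc_subset_Icc_right ht₀L)).isGeodesicFrom ht₀0).symm
  have hB : IsGeodesicFrom (f '' Icc t₀ L) x v₂ :=
    hxf ▸ hf1 ▸ (hf.mono (Icc_subset_Icc_left ht₀0)).isGeodesicFrom ht₀L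
  have hC : IsGeodesicFrom (g '' Icc 0 D) x v₃ := hg0 ▸ hg1 ▸ hg.isGeodesicFrom dist_nonneg
  have hxf' (s : ℝ) (hs : s ∈ Icc 0 L) : dist x (f s) = |s - t₀| := by
    rw [← hxf, hf t₀ ⟨ht₀0, ht₀L⟩ s hs, abs_sub_comm]
  have hxgR (h₃ : R ≤ D) : dist x (g R) = R := by
    rw [← hg0, hg.dist_eq_sub ⟨le_rfl, dist_nonneg⟩ ⟨hR0, h₃⟩ hR0, sub_zero]
  refine ⟨⟨fun h₁ h₂ => ?_, fun h₁ h₃ => ?_, fun h₂ h₃ => ?_⟩, ?_⟩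
  · rw [hf.dist_eq_sub ⟨by linarith, by linarith⟩ ⟨by linarith, by linarith⟩ (by linarith)]
    linarith
  · have hv₁' : dist x (f (t₀ - R)) = R := by
      rw [hxf' _ ⟨by linarith, by linarith⟩, sub_sub_cancel_left, abs_neg, abs_of_nonneg hR0]
    linarith [hσ₁₃.two_mul_sub_le_dist_of_mem_cnbhd hx13 hA
      (mem_image_of_mem f ⟨by linarith, by linarith⟩) hC (mem_image_of_mem g ⟨hR0, h₃⟩) hv₁'
      (hxgR h₃)]
  · have hv₂' : dist x (f (t₀ + R)) = R := by
      rw [hxf' _ ⟨by linarith, by linarith⟩, add_sub_cancel_left, abs_of_nonneg hR0]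
    linarith [hσ₂₃.two_mul_sub_le_dist_of_mem_cnbhd hx23 hB
      (mem_image_of_mem f ⟨by linarith, by linarith⟩) hC (mem_image_of_mem g ⟨hR0, h₃⟩) hv₂'
      (hxgR h₃)]
  · rw [ite_image_Icc_eq f fun h => by linarith] at hγ₁
    rw [ite_image_Icc_eq f fun h => by linarith] at hγ₂
    rw [ite_image_Icc_eq g id] at hγ₃
    have h12 : σ₁₂ = f '' Icc 0 t₀ ∪ f '' Icc t₀ L := by
      rw [hσ₁₂, ← image_union, Icc_union_Icc_eq_Icc ht₀0 ht₀L]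
    have h₁ := (hf.mono (Icc_subset_Icc_right ht₀L)).image_Icc_subset_closedBall_union_left R
    have h₂ := (hf.mono (Icc_subset_Icc_left ht₀0)).image_Icc_subset_closedBall_union_right R
    have h₃ := hg.image_Icc_subset_closedBall_union_right R
    rw [hxf, ← hγ₁] at h₁
    rw [hxf, ← hγ₂] at h₂
    rw [hg0, zero_add, ← hγ₃] at h₃
    exact h12 ▸ slim.tripod_subset hδ.le hA hB hC hσ₁₃ hσ₂₃ h₁ h₂ h₃

/-- tripod decomposition of a slim triangle: with `x` an internal point of
the side `σ₁₂` that is `δ`-close to the two other sides, `R ≥ 10δ`, `v_i'` the points at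
distance `R` from `x` towards the vertices and `γ_i` the corresponding terminal subsegments,
one has (a) `d(v_i', v_j') ≥ 2R − 6δ` whenever defined, and (b) the triangle is contained in
`B(x, R+δ) ∪ N_δ(γ₁) ∪ N_δ(γ₂) ∪ N_δ(γ₃)`. -/
theorem slim_triangle_tripod_decomposition {X : Type} [MetricSpace X]
    (δ : ℝ) (hδ : 0 < δ) (geo : GeodesicSpace X) (slim : SlimTriangles X δ)
    (v₁ v₂ v₃ : X)
    (f : ℝ → X) (hf0 : f 0 = v₁) (hf1 : f (dist v₁ v₂) = v₂)
    (hfiso : ∀ s ∈ Set.Icc (0 : ℝ) (dist v₁ v₂), ∀ t ∈ Set.Icc (0 : ℝ) (dist v₁ v₂),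
      dist (f s) (f t) = |s - t|)
    (σ₁₂ : Set X) (hσ₁₂ : σ₁₂ = f '' Set.Icc (0 : ℝ) (dist v₁ v₂))
    (σ₁₃ σ₂₃ : Set X) (hσ₁₃ : IsGeodesicFrom σ₁₃ v₁ v₃) (hσ₂₃ : IsGeodesicFrom σ₂₃ v₂ v₃)
    (t₀ : ℝ) (ht₀ : t₀ ∈ Set.Icc (0 : ℝ) (dist v₁ v₂))
    (x : X) (hx : x = f t₀)
    (hx13 : x ∈ cnbhd δ σ₁₃) (hx23 : x ∈ cnbhd δ σ₂₃)
    (R : ℝ) (hR : 10 * δ ≤ R)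
    (g : ℝ → X) (hg0 : g 0 = x) (hg1 : g (dist x v₃) = v₃)
    (hgiso : ∀ s ∈ Set.Icc (0 : ℝ) (dist x v₃), ∀ t ∈ Set.Icc (0 : ℝ) (dist x v₃),
      dist (g s) (g t) = |s - t|)
    (γ₁ γ₂ γ₃ : Set X)
    (hγ₁ : γ₁ = if R ≤ t₀ then f '' Set.Icc (0 : ℝ) (t₀ - R) else ∅)
    (hγ₂ : γ₂ = if R ≤ dist v₁ v₂ - t₀ then f '' Set.Icc (t₀ + R) (dist v₁ v₂) else ∅)
    (hγ₃ : γ₃ = if R ≤ dist x v₃ then g '' Set.Icc R (dist x v₃) else ∅) :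
    ((R ≤ t₀ → R ≤ dist v₁ v₂ - t₀ →
        2 * R - 6 * δ ≤ dist (f (t₀ - R)) (f (t₀ + R))) ∧
     (R ≤ t₀ → R ≤ dist x v₃ →
        2 * R - 6 * δ ≤ dist (f (t₀ - R)) (g R)) ∧
     (R ≤ dist v₁ v₂ - t₀ → R ≤ dist x v₃ →
        2 * R - 6 * δ ≤ dist (f (t₀ + R)) (g R))) ∧
    σ₁₂ ∪ σ₁₃ ∪ σ₂₃ ⊆
      Metric.closedBall x (R + δ) ∪ cnbhd δ γ₁ ∪ cnbhd δ γ₂ ∪ cnbhd δ γ₃ :=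
  slim_triangle_tripod_decomposition_general δ hδ slim v₁ v₂ v₃ f hf0 hf1 hfiso σ₁₂ hσ₁₂ σ₁₃ σ₂₃
    hσ₁₃ hσ₂₃ t₀ ht₀ x hx hx13 hx23 R hR g hg0 hg1 hgiso γ₁ γ₂ γ₃ hγ₁ hγ₂ hγ₃
end

section
/- Let Γ be a group and M a bounded Γ-module, and let E := (⋯ → E₁ → E₀ → M → 0) and E' := (⋯ → E'₁ → E'₀ → M → 0) be two b-projective resolutions of M. Then: (1) there exists a bounded chain Γ-map φ : E → E' extending the identity of M, i.e. bounded Γ-equivariant linear maps φ_k : E_k → E'_k commuting with the boundary maps and compatible with the augmentations to M; (2) any two such bounded chain Γ-maps φ, ψ extending id_M are boundedly Γ-homotopic: there exist bounded Γ-equivariant linear maps h_k : E_k → E'_{k+1} such that φ_k − ψ_k = ∂'_{k+1} ∘ h_k + h_{k−1} ∘ ∂_k for all k ≥ 0 (with h_{−1} = 0). -/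
/-- A bounded `Γ`-module: a normed real vector space with a linear `Γ`-action by uniformly
bounded operators. -/
structure BddModule (Γ : Type) [Group Γ] where
  V : Type
  [nacg : NormedAddCommGroup V]
  [nsp : NormedSpace ℝ V]
  ρ : Γ →* Module.End ℝ V
  bdd : ∃ L : ℝ, 0 < L ∧ ∀ (γ : Γ) (v : V), ‖ρ γ v‖ ≤ L * ‖v‖

attribute [instance] BddModule.nacg BddModule.nsp

/-- A linear map between normed spaces is undistorted if elements of its range admit
preimages of linearly controlled norm. -/
def Undistorted {V W : Type} [NormedAddCommGroup V] [NormedSpace ℝ V]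
    [NormedAddCommGroup W] [NormedSpace ℝ W] (f : V →ₗ[ℝ] W) : Prop :=
  ∃ K : ℝ, 0 < K ∧ ∀ w ∈ LinearMap.range f, ∃ v, f v = w ∧ ‖v‖ ≤ K * ‖w‖

variable {Γ : Type} [Group Γ]

/-- A bounded `Γ`-map between bounded `Γ`-modules: a bounded `Γ`-equivariant linear map. -/
def IsBddMap (A B : BddModule Γ) (f : A.V →ₗ[ℝ] B.V) : Prop :=
  (∃ C : ℝ, ∀ v : A.V, ‖f v‖ ≤ C * ‖v‖) ∧
  (∀ (γ : Γ) (v : A.V), f (A.ρ γ v) = B.ρ γ (f v))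

/-- A bounded `Γ`-module `P` is `b`-projective if every bounded `Γ`-map from `P` lifts along
any surjective undistorted bounded `Γ`-map. -/
def BProjective (P : BddModule Γ) : Prop :=
  ∀ (A B : BddModule Γ) (φ : A.V →ₗ[ℝ] B.V), IsBddMap A B φ → Undistorted φ →
    Function.Surjective φ → ∀ f : P.V →ₗ[ℝ] B.V, IsBddMap P B f →
      ∃ g : P.V →ₗ[ℝ] A.V, IsBddMap P A g ∧ φ.comp g = f

/-- A bounded `Γ`-resolution `⋯ → E₁ → E₀ → M → 0` of a bounded `Γ`-module `M`:
an exact complex of bounded `Γ`-modules and bounded `Γ`-maps. -/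
structure BddResolution (Γ : Type) [Group Γ] (M : BddModule Γ) where
  E : ℕ → BddModule Γ
  d : (k : ℕ) → (E (k + 1)).V →ₗ[ℝ] (E k).V
  ε : (E 0).V →ₗ[ℝ] M.V
  d_bdd : ∀ k, IsBddMap (E (k + 1)) (E k) (d k)
  ε_bdd : IsBddMap (E 0) M ε
  exact_at_M : Function.Surjective ε
  exact_at_zero : LinearMap.range (d 0) = LinearMap.ker ε
  exact_at_succ : ∀ k, LinearMap.range (d (k + 1)) = LinearMap.ker (d k)

/-- A `b`-projective resolution: all modules are `b`-projective and all maps undistorted. -/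
def IsBProjectiveResolution {M : BddModule Γ} (E : BddResolution Γ M) : Prop :=
  (∀ k, BProjective (E.E k)) ∧ (∀ k, Undistorted (E.d k)) ∧ Undistorted E.ε

/-- A bounded chain `Γ`-map between two resolutions of `M` extending the identity of `M`. -/
def IsBddChainMapExtendingId {M : BddModule Γ} (E E' : BddResolution Γ M)
    (φ : (k : ℕ) → (E.E k).V →ₗ[ℝ] (E'.E k).V) : Prop :=
  (∀ k, IsBddMap (E.E k) (E'.E k) (φ k)) ∧
  (∀ k, (φ k).comp (E.d k) = (E'.d k).comp (φ (k + 1))) ∧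
  E'.ε.comp (φ 0) = E.ε
/-! The comparison theorem is proved as in ordinary homological algebra, by building the chain
map and the homotopy degree by degree through lifting along the boundary maps of `E'`. The only
new point is that `b`-projectivity lifts along *surjective* undistorted maps, whereas a boundary
map `d'` need not be surjective; but when the map to be lifted lands in the range of `d'`, one may
replace the target by this range, which is a `Γ`-invariant subspace, and then `d'` becomes
surjective and stays undistorted. -/

theorem exists_dependent_seq_of_step {X : ℕ → Type*} (I : ∀ k, X k → Prop)
    (R : ∀ k, X k → X (k + 1) → Prop) {x₀ : X 0} (h₀ : I 0 x₀)
    (step : ∀ k x, I k x → ∃ y, I (k + 1) y ∧ R k x y) :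
    ∃ x : ∀ k, X k, x 0 = x₀ ∧ ∀ k, I k (x k) ∧ R k (x k) (x (k + 1)) := by
  choose next hnext_I hnext_R using step
  let y : ∀ k, {x : X k // I k x} := fun k =>
    Nat.rec ⟨x₀, h₀⟩ (fun k y => ⟨next k y.1 y.2, hnext_I k y.1 y.2⟩) k
  exact ⟨fun k => (y k).1, rfl, fun k => ⟨(y k).2, hnext_R k _ _⟩⟩

theorem LinearMap.exists_bound_iff_continuous {V W : Type*} [NormedAddCommGroup V]
    [NormedSpace ℝ V] [NormedAddCommGroup W] [NormedSpace ℝ W] (f : V →ₗ[ℝ] W) :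
    (∃ C : ℝ, ∀ v, ‖f v‖ ≤ C * ‖v‖) ↔ Continuous f :=
  ⟨fun ⟨C, hC⟩ => AddMonoidHomClass.continuous_of_bound f C hC,
    fun hf => ⟨‖(⟨f, hf⟩ : V →L[ℝ] W)‖, (⟨f, hf⟩ : V →L[ℝ] W).le_opNorm⟩⟩

theorem Undistorted.codRestrict {V W : Type} [NormedAddCommGroup V] [NormedSpace ℝ V]
    [NormedAddCommGroup W] [NormedSpace ℝ W] {f : V →ₗ[ℝ] W} (hf : Undistorted f)
    (S : Submodule ℝ W) (hfS : ∀ v, f v ∈ S) : Undistorted (f.codRestrict S hfS) := by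
  obtain ⟨K, hK, hlift⟩ := hf
  refine ⟨K, hK, fun w ⟨u, hu⟩ => ?_⟩
  obtain ⟨v, hv, hvK⟩ := hlift w ⟨u, congrArg Subtype.val hu⟩
  exact ⟨v, Subtype.ext hv, hvK⟩

noncomputable def BddModule.restrict (B : BddModule Γ) (S : Submodule ℝ B.V)
    (hS : ∀ γ, ∀ x ∈ S, B.ρ γ x ∈ S) : BddModule Γ where
  V := S
  ρ :=
    { toFun := fun γ => (B.ρ γ).restrict (hS γ)
      map_one' := by ext; simp
      map_mul' := fun _ _ => by ext; simp }
  bdd := by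
    obtain ⟨L, hL, hρ⟩ := B.bdd
    exact ⟨L, hL, fun γ v => hρ γ v⟩

namespace IsBddMap

variable {A B C : BddModule Γ}

theorem continuous {f : A.V →ₗ[ℝ] B.V} (hf : IsBddMap A B f) : Continuous f :=
  (f.exists_bound_iff_continuous).1 hf.1

theorem comp {f : B.V →ₗ[ℝ] C.V} {g : A.V →ₗ[ℝ] B.V} (hf : IsBddMap B C f)
    (hg : IsBddMap A B g) : IsBddMap A C (f.comp g) :=
  ⟨(LinearMap.exists_bound_iff_continuous _).2 (hf.continuous.comp hg.continuous),
    fun γ v => by simp [hf.2, hg.2]⟩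

theorem sub {f g : A.V →ₗ[ℝ] B.V} (hf : IsBddMap A B f) (hg : IsBddMap A B g) :
    IsBddMap A B (f - g) :=
  ⟨(LinearMap.exists_bound_iff_continuous _).2 (hf.continuous.sub hg.continuous),
    fun γ v => by simp [hf.2, hg.2]⟩

theorem codRestrict {f : A.V →ₗ[ℝ] B.V} (hf : IsBddMap A B f) (S : Submodule ℝ B.V)
    (hS : ∀ γ, ∀ x ∈ S, B.ρ γ x ∈ S) (hfS : ∀ v, f v ∈ S) :
    IsBddMap A (B.restrict S hS) (f.codRestrict S hfS) :=
  ⟨hf.1, fun γ v => Subtype.ext (hf.2 γ v)⟩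

theorem range_invariant {f : A.V →ₗ[ℝ] B.V} (hf : IsBddMap A B f) (γ : Γ) :
    ∀ x ∈ LinearMap.range f, B.ρ γ x ∈ LinearMap.range f := by
  rintro _ ⟨v, rfl⟩
  exact ⟨A.ρ γ v, hf.2 γ v⟩

end IsBddMap

theorem BProjective.exists_lift_of_range_le {P A B : BddModule Γ} (hP : BProjective P)
    {d : A.V →ₗ[ℝ] B.V} (hd : IsBddMap A B d) (hdu : Undistorted d)
    {f : P.V →ₗ[ℝ] B.V} (hf : IsBddMap P B f) (hfd : LinearMap.range f ≤ LinearMap.range d) :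
    ∃ g : P.V →ₗ[ℝ] A.V, IsBddMap P A g ∧ d.comp g = f := by
  have hfS : ∀ v, f v ∈ LinearMap.range d := fun v => hfd ⟨v, rfl⟩
  obtain ⟨g, hg, hdg⟩ := hP A (B.restrict _ hd.range_invariant) d.rangeRestrict
    (hd.codRestrict _ hd.range_invariant _) (hdu.codRestrict _ _) d.surjective_rangeRestrict
    (f.codRestrict _ hfS) (hf.codRestrict _ hd.range_invariant hfS)
  exact ⟨g, hg, LinearMap.ext fun v => congrArg Subtype.val (LinearMap.congr_fun hdg v)⟩

namespace BddResolution

variable {M : BddModule Γ} (E : BddResolution Γ M)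

theorem range_le_range_d_zero_iff {V : Type*} [AddCommGroup V] [Module ℝ V]
    (f : V →ₗ[ℝ] (E.E 0).V) : LinearMap.range f ≤ LinearMap.range (E.d 0) ↔ E.ε.comp f = 0 := by
  rw [E.exact_at_zero, LinearMap.range_le_ker_iff]

theorem range_le_range_d_succ_iff {V : Type*} [AddCommGroup V] [Module ℝ V] (k : ℕ)
    (f : V →ₗ[ℝ] (E.E (k + 1)).V) :
    LinearMap.range f ≤ LinearMap.range (E.d (k + 1)) ↔ (E.d k).comp f = 0 := by
  rw [E.exact_at_succ, LinearMap.range_le_ker_iff]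

theorem ε_comp_d : E.ε.comp (E.d 0) = 0 :=
  (E.range_le_range_d_zero_iff _).1 le_rfl

theorem d_comp_d (k : ℕ) : (E.d k).comp (E.d (k + 1)) = 0 :=
  (E.range_le_range_d_succ_iff k _).1 le_rfl

theorem exists_bddChainMapExtendingId (E' : BddResolution Γ M)
    (hE : ∀ k, BProjective (E.E k)) (hd' : ∀ k, Undistorted (E'.d k))
    (hε' : Undistorted E'.ε) :
    ∃ φ : (k : ℕ) → (E.E k).V →ₗ[ℝ] (E'.E k).V, IsBddChainMapExtendingId E E' φ := by
  obtain ⟨φ₀, hφ₀, hεφ₀⟩ := hE 0 _ _ E'.ε E'.ε_bdd hε' E'.exact_at_M E.ε E.ε_bdd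
  have hφ₀d : LinearMap.range (φ₀.comp (E.d 0)) ≤ LinearMap.range (E'.d 0) := by
    rw [range_le_range_d_zero_iff, ← LinearMap.comp_assoc, hεφ₀, E.ε_comp_d]
  -- The invariant carried along is that the next map to be lifted lands in the range of `d'`.
  obtain ⟨φ, rfl, hφ⟩ := exists_dependent_seq_of_step
    (fun k f => IsBddMap (E.E k) (E'.E k) f ∧
      LinearMap.range (f.comp (E.d k)) ≤ LinearMap.range (E'.d k))
    (fun k f g => f.comp (E.d k) = (E'.d k).comp g) ⟨hφ₀, hφ₀d⟩ fun k f ⟨hf, hfd⟩ => by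
      obtain ⟨g, hg, hdg⟩ :=
        (hE (k + 1)).exists_lift_of_range_le (E'.d_bdd k) (hd' k) (hf.comp (E.d_bdd k)) hfd
      refine ⟨g, ⟨hg, ?_⟩, hdg.symm⟩
      rw [range_le_range_d_succ_iff, ← LinearMap.comp_assoc, hdg, LinearMap.comp_assoc,
        E.d_comp_d, LinearMap.comp_zero]
  exact ⟨φ, fun k => (hφ k).1.1, fun k => (hφ k).2, hεφ₀⟩

end BddResolution

theorem IsBddChainMapExtendingId.exists_homotopy {M : BddModule Γ} {E E' : BddResolution Γ M}
    {φ ψ : (k : ℕ) → (E.E k).V →ₗ[ℝ] (E'.E k).V} (hφ : IsBddChainMapExtendingId E E' φ)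
    (hψ : IsBddChainMapExtendingId E E' ψ)
    (hE : ∀ k, BProjective (E.E k)) (hd' : ∀ k, Undistorted (E'.d k)) :
    ∃ h : (k : ℕ) → (E.E k).V →ₗ[ℝ] (E'.E (k + 1)).V,
      (∀ k, IsBddMap (E.E k) (E'.E (k + 1)) (h k)) ∧
      φ 0 - ψ 0 = (E'.d 0).comp (h 0) ∧
      (∀ k, φ (k + 1) - ψ (k + 1) = (E'.d (k + 1)).comp (h (k + 1)) + (h k).comp (E.d k)) := by
  have hφψ k : IsBddMap (E.E k) (E'.E k) (φ k - ψ k) := (hφ.1 k).sub (hψ.1 k)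
  have hcomm k : (φ k - ψ k).comp (E.d k) = (E'.d k).comp (φ (k + 1) - ψ (k + 1)) := by
    rw [LinearMap.sub_comp, LinearMap.comp_sub, hφ.2.1, hψ.2.1]
  obtain ⟨h₀, hh₀, hdh₀⟩ := (hE 0).exists_lift_of_range_le (E'.d_bdd 0) (hd' 0) (hφψ 0)
    (by rw [E'.range_le_range_d_zero_iff, LinearMap.comp_sub, hφ.2.2, hψ.2.2, sub_self])
  have hh₀d : LinearMap.range (φ 1 - ψ 1 - h₀.comp (E.d 0)) ≤ LinearMap.range (E'.d 1) := by
    rw [E'.range_le_range_d_succ_iff, LinearMap.comp_sub, ← hcomm, ← LinearMap.comp_assoc, hdh₀,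
      sub_self]
  obtain ⟨h, rfl, hh⟩ := exists_dependent_seq_of_step
    (fun k h => IsBddMap (E.E k) (E'.E (k + 1)) h ∧
      LinearMap.range (φ (k + 1) - ψ (k + 1) - h.comp (E.d k)) ≤ LinearMap.range (E'.d (k + 1)))
    (fun k h h' => φ (k + 1) - ψ (k + 1) = (E'.d (k + 1)).comp h' + h.comp (E.d k))
    ⟨hh₀, hh₀d⟩ fun k h ⟨hh, hu⟩ => by
      obtain ⟨h', hh', hdh'⟩ := (hE (k + 1)).exists_lift_of_range_le (E'.d_bdd (k + 1))
        (hd' (k + 1)) ((hφψ (k + 1)).sub (hh.comp (E.d_bdd k))) hu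
      refine ⟨h', ⟨hh', ?_⟩, sub_eq_iff_eq_add.1 hdh'.symm⟩
      rw [E'.range_le_range_d_succ_iff, LinearMap.comp_sub, ← hcomm, ← LinearMap.comp_assoc,
        hdh', ← LinearMap.sub_comp, sub_sub_cancel, LinearMap.comp_assoc, E.d_comp_d,
        LinearMap.comp_zero]
  exact ⟨h, fun k => (hh k).1.1, hdh₀.symm, fun k => (hh k).2⟩

/-- uniqueness of `b`-projective resolutions up to bounded homotopy:
between any two `b`-projective resolutions of a bounded `Γ`-module `M` there exists a bounded
chain `Γ`-map extending `id_M`, and any two such chain maps are boundedly `Γ`-homotopic. -/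
theorem bprojective_resolutions_comparison {M : BddModule Γ}
    (E E' : BddResolution Γ M)
    (hE : IsBProjectiveResolution E) (hE' : IsBProjectiveResolution E') :
    (∃ φ : (k : ℕ) → (E.E k).V →ₗ[ℝ] (E'.E k).V, IsBddChainMapExtendingId E E' φ) ∧
    (∀ φ ψ : (k : ℕ) → (E.E k).V →ₗ[ℝ] (E'.E k).V,
      IsBddChainMapExtendingId E E' φ → IsBddChainMapExtendingId E E' ψ →
      ∃ h : (k : ℕ) → (E.E k).V →ₗ[ℝ] (E'.E (k + 1)).V,
        (∀ k, IsBddMap (E.E k) (E'.E (k + 1)) (h k)) ∧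
        φ 0 - ψ 0 = (E'.d 0).comp (h 0) ∧
        (∀ k, φ (k + 1) - ψ (k + 1) =
          (E'.d (k + 1)).comp (h (k + 1)) + (h k).comp (E.d k))) :=
  ⟨E.exists_bddChainMapExtendingId E' hE.1 hE'.2.1 hE'.2.2,
    fun _ _ hφ hψ => hφ.exists_homotopy hψ hE.1 hE'.2.1⟩
end
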